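/- arXiv:math/9402207 — 7 statements merged into one kernel-verified Lean document; each statement's English description precedes it below -/
import Mathlib

section
/- For b = 1 + iβ with β real, and real numbers t > s ≥ 0, one has |t^b - s^b| ≥ t - s, where t^b = t^{1+iβ} is defined via t^b = t·exp(iβ log t) for t > 0 and 0^b = 0. -/
open Complex

theorem stmt0 (β t s : ℝ) (hs : 0 ≤ s) (hst : s < t) :
    t - s ≤ ‖(t : ℂ) ^ ((1 : ℂ) + β * I) - (s : ℂ) ^ ((1 : ℂ) + β * I)‖ := by
  have ht : 0 < t := lt_of_le_of_lt hs hst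
  have hret : ((1 : ℂ) + β * I).re = 1 := by simp
  have h1 : ‖(t : ℂ) ^ ((1 : ℂ) + β * I)‖ = t := by
    rw [Complex.norm_cpow_eq_rpow_re_of_pos ht, hret, Real.rpow_one]
  have h2 : ‖(s : ℂ) ^ ((1 : ℂ) + β * I)‖ = s := by
    rcases eq_or_lt_of_le hs with h | h
    · rw [← h]
      have hb : (1 : ℂ) + β * I ≠ 0 := by
        intro hc
        have := congrArg Complex.re hc
        simp at this
      simp [Complex.zero_cpow hb]
    · rw [Complex.norm_cpow_eq_rpow_re_of_pos h, hret, Real.rpow_one]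
  calc t - s = ‖(t : ℂ) ^ ((1 : ℂ) + β * I)‖ -
        ‖(s : ℂ) ^ ((1 : ℂ) + β * I)‖ := by rw [h1, h2]
    _ ≤ _ := by simpa using norm_sub_norm_le ((t : ℂ) ^ ((1 : ℂ) + β * I)) ((s : ℂ) ^ ((1 : ℂ) + β * I))
end

section
/- Let f : [0,∞) → ℂ be Lipschitz with constant L and f(0) = 0. Define Ω_f : ℓ² → ℂ^ℕ by Ω_f(x)(n) = x(n) f(log(‖x‖₂/|x(n)|)) for x ≠ 0 with the convention that the term is 0 when x(n) = 0. Then for every s ∈ ℓ∞ with ‖s‖∞ ≤ 1 and every x ∈ ℓ², ‖Ω_f(sx) − s·Ω_f(x)‖₂ ≤ C₀ ‖x‖₂, where C₀ is a constant depending only on L, and sx denotes the coordinatewise product. -/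
open Complex
open scoped ENNReal

/-- The ℓ²-norm of a complex sequence, as `√(∑ |x n|²)`. -/
noncomputable def l2norm (x : ℕ → ℂ) : ℝ :=
  Real.sqrt (∑' n, ‖x n‖ ^ 2)

/-- The Kalton–Peck type map `Ω_f(x)(n) = x(n) f(log(‖x‖₂/|x(n)|))`, with the
convention that the coordinate is `0` when `x(n) = 0`. -/
noncomputable def OmegaF (f : ℝ → ℂ) (x : ℕ → ℂ) : ℕ → ℂ :=
  fun n => if x n = 0 then 0 else x n * f (Real.log (l2norm x / ‖x n‖))

lemma tlog_le {t M : ℝ} (ht : 0 < t) (htM : t ≤ M) : t * Real.log (M / t) ≤ M := by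
  have hM : 0 < M := lt_of_lt_of_le ht htM
  have h1 : Real.log (M / t) ≤ M / t - 1 :=
    Real.log_le_sub_one_of_pos (div_pos hM ht)
  calc t * Real.log (M / t) ≤ t * (M / t - 1) := by nlinarith
    _ = M - t := by field_simp
    _ ≤ M := by linarith

lemma coord_le_l2norm {x : ℕ → ℂ} (hA : Summable (fun n => ‖x n‖ ^ 2)) (n : ℕ) :
    ‖x n‖ ≤ l2norm x := by
  have h1 : ‖x n‖ ^ 2 ≤ ∑' m, ‖x m‖ ^ 2 :=
    Summable.le_tsum hA n (fun m _ => sq_nonneg _)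
  have h2 := Real.sqrt_le_sqrt h1
  rwa [Real.sqrt_sq (norm_nonneg _)] at h2

set_option maxHeartbeats 1000000 in
theorem stmt5 (L : ℝ) (hL : 0 ≤ L) :
    ∃ C₀ : ℝ, ∀ f : ℝ → ℂ,
      (∀ t s : ℝ, 0 ≤ t → 0 ≤ s → ‖f t - f s‖ ≤ L * |t - s|) →
      f 0 = 0 →
      ∀ s x : ℕ → ℂ, Memℓp x 2 → (∀ n, ‖s n‖ ≤ 1) →
        l2norm (fun n => OmegaF f (fun m => s m * x m) n - s n * OmegaF f x n) ≤
          C₀ * l2norm x := by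
  refine ⟨2 * L, ?_⟩
  intro f hf hf0 s x hx hs
  -- summability of |x n|^2
  have hA : Summable (fun n => ‖x n‖ ^ 2) := by
    have h := hx.summable (by norm_num : 0 < (2 : ℝ≥0∞).toReal)
    have h2 : (2 : ℝ≥0∞).toReal = (2 : ℝ) := by norm_num
    rw [h2] at h
    have heq : ∀ n, ‖x n‖ ^ (2:ℝ) = ‖x n‖ ^ 2 := fun n => by
      rw [Real.rpow_two]
    simpa only [heq] using h
  have hterm_le : ∀ n, ‖s n * x n‖ ^ 2 ≤ ‖x n‖ ^ 2 := by
    intro n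
    rw [norm_mul, mul_pow]
    have h1 := hs n
    have h2 := norm_nonneg (s n)
    have h3 := sq_nonneg (‖x n‖)
    have h4 : ‖s n‖ ^ 2 ≤ 1 := by nlinarith
    nlinarith [mul_le_mul_of_nonneg_right h4 h3]
  have hS : Summable (fun n => ‖s n * x n‖ ^ 2) :=
    Summable.of_nonneg_of_le (fun n => sq_nonneg _) hterm_le hA
  set A := ∑' n, ‖x n‖ ^ 2 with hAdef
  set S := ∑' n, ‖s n * x n‖ ^ 2 with hSdef
  have hA0 : 0 ≤ A := tsum_nonneg (fun n => sq_nonneg _)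
  have hS0 : 0 ≤ S := tsum_nonneg (fun n => sq_nonneg _)
  have hSA : S ≤ A := Summable.tsum_le_tsum hterm_le hS hA
  set N := l2norm x with hNdef
  have hNsx : l2norm (fun m => s m * x m) = Real.sqrt S := rfl
  set Ns := Real.sqrt S with hNsdef
  have hN0 : 0 ≤ N := Real.sqrt_nonneg _
  have hNs0 : 0 ≤ Ns := Real.sqrt_nonneg _
  have hNsN : Ns ≤ N := Real.sqrt_le_sqrt hSA
  have hNsq : N ^ 2 = A := Real.sq_sqrt hA0
  have hNssq : Ns ^ 2 = S := Real.sq_sqrt hS0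
  by_cases hz : ∀ n, s n * x n = 0
  · -- trivial case: the sequence is identically zero
    have hzero : ∀ n, OmegaF f (fun m => s m * x m) n - s n * OmegaF f x n = 0 := by
      intro n
      have h1 : OmegaF f (fun m => s m * x m) n = 0 := by
        simp [OmegaF, hz n]
      rcases mul_eq_zero.mp (hz n) with h | h
      · simp [h1, h]
      · simp [h1, OmegaF, h]
    have : l2norm (fun n => OmegaF f (fun m => s m * x m) n - s n * OmegaF f x n) = 0 := by
      simp only [l2norm, hzero]
      simp
    rw [this]
    positivity
  · push_neg at hz
    obtain ⟨n₀, hn₀⟩ := hz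
    have hNspos : 0 < Ns := by
      have h1 : 0 < ‖s n₀ * x n₀‖ := norm_pos_iff.mpr hn₀
      have h2 : ‖s n₀ * x n₀‖ ≤ Ns := coord_le_l2norm hS n₀
      linarith
    have hNpos : 0 < N := lt_of_lt_of_le hNspos hNsN
    set a := Real.log (N / Ns) with hadef
    have ha0 : 0 ≤ a := Real.log_nonneg ((one_le_div hNspos).mpr hNsN)
    set g := fun n => ‖OmegaF f (fun m => s m * x m) n - s n * OmegaF f x n‖
      with hgdef
    -- pointwise bound
    have hterm : ∀ n, g n ^ 2 ≤
        2 * L ^ 2 * (a ^ 2 * ‖s n * x n‖ ^ 2 + ‖x n‖ ^ 2) := by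
      intro n
      by_cases hsx : s n * x n = 0
      · have hg0 : g n = 0 := by
          have h1 : OmegaF f (fun m => s m * x m) n = 0 := by simp [OmegaF, hsx]
          rcases mul_eq_zero.mp hsx with h | h
          · simp [hgdef, h1, h]
          · simp [hgdef, h1, OmegaF, h]
        rw [hg0]
        have h0 : (0:ℝ) ^ 2 = 0 := by norm_num
        rw [h0]
        positivity
      · have hs0 : s n ≠ 0 := fun h => hsx (by simp [h])
        have hx0 : x n ≠ 0 := fun h => hsx (by simp [h])
        have hsabs : 0 < ‖s n‖ := norm_pos_iff.mpr hs0
        have hxabs : 0 < ‖x n‖ := norm_pos_iff.mpr hx0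
        have hsxabs : 0 < ‖s n * x n‖ := norm_pos_iff.mpr hsx
        set u := Real.log (Ns / ‖s n * x n‖) with hudef
        set v := Real.log (N / ‖x n‖) with hvdef
        have hxle : ‖x n‖ ≤ N := coord_le_l2norm hA n
        have hsxle : ‖s n * x n‖ ≤ Ns := coord_le_l2norm hS n
        have hu0 : 0 ≤ u := Real.log_nonneg ((one_le_div hsxabs).mpr hsxle)
        have hv0 : 0 ≤ v := Real.log_nonneg ((one_le_div hxabs).mpr hxle)
        have e1 : OmegaF f (fun m => s m * x m) n = s n * x n * f u := by
          simp only [OmegaF]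
          rw [if_neg hsx, hNsx, ← hudef]
        have e2 : OmegaF f x n = x n * f v := by
          simp only [OmegaF]
          rw [if_neg hx0, ← hNdef, ← hvdef]
        have hgn : g n = ‖s n * x n‖ * ‖f u - f v‖ := by
          simp only [hgdef]
          rw [e1, e2,
            show s n * x n * f u - s n * (x n * f v) = (s n * x n) * (f u - f v) by ring,
            norm_mul]
        set b := -Real.log (‖s n‖) with hbdef
        have hb0 : 0 ≤ b := by
          have := Real.log_nonpos (le_of_lt hsabs) (hs n)
          simp only [hbdef]; linarith
        have huv : u - v = b - a := by
          have h1 : u = Real.log Ns - (Real.log (‖s n‖) +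
              Real.log (‖x n‖)) := by
            rw [hudef, Real.log_div (ne_of_gt hNspos) (ne_of_gt hsxabs), norm_mul,
              Real.log_mul (ne_of_gt hsabs) (ne_of_gt hxabs)]
          have h2 : v = Real.log N - Real.log (‖x n‖) := by
            rw [hvdef, Real.log_div (ne_of_gt hNpos) (ne_of_gt hxabs)]
          have h3 : a = Real.log N - Real.log Ns := by
            rw [hadef, Real.log_div (ne_of_gt hNpos) (ne_of_gt hNspos)]
          rw [h1, h2, h3, hbdef]; ring
        have huvabs : |u - v| ≤ a + b := by
          rw [huv]
          calc |b - a| ≤ |b| + |a| := abs_sub _ _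
            _ = b + a := by rw [_root_.abs_of_nonneg hb0, _root_.abs_of_nonneg ha0]
            _ = a + b := by ring
        have hfd : ‖f u - f v‖ ≤ L * (a + b) := by
          calc ‖f u - f v‖ ≤ L * |u - v| := hf u v hu0 hv0
            _ ≤ L * (a + b) := by
              apply mul_le_mul_of_nonneg_left huvabs hL
        have hg_le : g n ≤ ‖s n * x n‖ * (L * (a + b)) := by
          rw [hgn]
          exact mul_le_mul_of_nonneg_left hfd (le_of_lt hsxabs)
        have hg_nonneg : 0 ≤ g n := norm_nonneg _
        have hsb : ‖s n‖ * b ≤ 1 := by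
          have h1 := tlog_le hsabs (hs n)
          rwa [Real.log_div one_ne_zero (ne_of_gt hsabs), Real.log_one, zero_sub] at h1
        have hsb0 : 0 ≤ ‖s n‖ * b := mul_nonneg (le_of_lt hsabs) hb0
        have hbound2 : ‖s n * x n‖ ^ 2 * b ^ 2 ≤ ‖x n‖ ^ 2 := by
          have h1 : ‖s n * x n‖ ^ 2 * b ^ 2
              = ‖x n‖ ^ 2 * (‖s n‖ * b) ^ 2 := by
            rw [norm_mul]; ring
          rw [h1]
          have h2 : (‖s n‖ * b) ^ 2 ≤ 1 := by nlinarith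
          nlinarith [sq_nonneg (‖x n‖)]
        have hsq : g n ^ 2 ≤ (‖s n * x n‖ * (L * (a + b))) ^ 2 := by
          apply pow_le_pow_left₀ hg_nonneg hg_le
        have hab2 : (a + b) ^ 2 ≤ 2 * a ^ 2 + 2 * b ^ 2 := by nlinarith [sq_nonneg (a - b)]
        calc g n ^ 2 ≤ (‖s n * x n‖ * (L * (a + b))) ^ 2 := hsq
          _ = L ^ 2 * (‖s n * x n‖ ^ 2 * (a + b) ^ 2) := by ring
          _ ≤ L ^ 2 * (‖s n * x n‖ ^ 2 * (2 * a ^ 2 + 2 * b ^ 2)) := by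
              apply mul_le_mul_of_nonneg_left _ (sq_nonneg L)
              exact mul_le_mul_of_nonneg_left hab2 (sq_nonneg _)
          _ = 2 * L ^ 2 * (a ^ 2 * ‖s n * x n‖ ^ 2
                + ‖s n * x n‖ ^ 2 * b ^ 2) := by ring
          _ ≤ 2 * L ^ 2 * (a ^ 2 * ‖s n * x n‖ ^ 2 + ‖x n‖ ^ 2) := by
              apply mul_le_mul_of_nonneg_left _ (by positivity)
              linarith
    -- summability of the dominating sequence
    have hRHSsum : Summable (fun n =>
        2 * L ^ 2 * (a ^ 2 * ‖s n * x n‖ ^ 2 + ‖x n‖ ^ 2)) :=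
      (((hS.mul_left (a ^ 2)).add hA).mul_left (2 * L ^ 2))
    have hgsum : Summable (fun n => g n ^ 2) :=
      Summable.of_nonneg_of_le (fun n => sq_nonneg _) hterm hRHSsum
    have htsum : ∑' n, g n ^ 2 ≤ 2 * L ^ 2 * (a ^ 2 * S + A) := by
      calc ∑' n, g n ^ 2
          ≤ ∑' n, 2 * L ^ 2 * (a ^ 2 * ‖s n * x n‖ ^ 2
              + ‖x n‖ ^ 2) := Summable.tsum_le_tsum hterm hgsum hRHSsum
        _ = 2 * L ^ 2 * (a ^ 2 * S + A) := by
            rw [tsum_mul_left, Summable.tsum_add (hS.mul_left (a ^ 2)) hA, tsum_mul_left]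
    have haNs : Ns * a ≤ N := tlog_le hNspos hNsN
    have haS : a ^ 2 * S ≤ A := by
      have h1 : (Ns * a) ^ 2 ≤ N ^ 2 := by
        apply pow_le_pow_left₀ (mul_nonneg hNs0 ha0) haNs
      rw [hNsq] at h1
      calc a ^ 2 * S = (Ns * a) ^ 2 := by rw [← hNssq]; ring
        _ ≤ A := h1
    have htotal : ∑' n, g n ^ 2 ≤ (2 * L) ^ 2 * A := by
      calc ∑' n, g n ^ 2 ≤ 2 * L ^ 2 * (a ^ 2 * S + A) := htsum
        _ ≤ 2 * L ^ 2 * (A + A) := by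
            apply mul_le_mul_of_nonneg_left _ (by positivity)
            linarith
        _ = (2 * L) ^ 2 * A := by ring
    have hfinal : l2norm (fun n => OmegaF f (fun m => s m * x m) n - s n * OmegaF f x n)
        = Real.sqrt (∑' n, g n ^ 2) := rfl
    rw [hfinal]
    calc Real.sqrt (∑' n, g n ^ 2) ≤ Real.sqrt ((2 * L) ^ 2 * A) :=
          Real.sqrt_le_sqrt htotal
      _ = Real.sqrt ((2 * L) ^ 2) * Real.sqrt A := Real.sqrt_mul (sq_nonneg _) A
      _ = 2 * L * l2norm x := by
          rw [Real.sqrt_sq (by linarith : (0:ℝ) ≤ 2 * L)]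
          rfl
end

section
/- Let f : [0,∞) → ℂ be Lipschitz with f(0) = 0 and define Ω_f on ℓ² as above. Then for any x ∈ ℓ², Ω_f(x) ∈ ℓ² need not hold in general, but the quantity ‖(x,y)‖_f = ‖x‖₂ + ‖y − Ω_f(x)‖₂ is a quasi-norm on the space Z₂(f) of pairs (x,y) ∈ ℓ² × ℂ^ℕ with ‖(x,y)‖_f < ∞: there is a constant Δ ≥ 1 so that ‖(x₁+x₂, y₁+y₂)‖_f ≤ Δ(‖(x₁,y₁)‖_f + ‖(x₂,y₂)‖_f) for all pairs in Z₂(f). -/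
open Complex
open scoped ENNReal

/-- The quasi-norm `‖(x,y)‖_f = ‖x‖₂ + ‖y − Ω_f(x)‖₂` on `Z₂(f)`. -/
noncomputable def Qnorm (f : ℝ → ℂ) (x y : ℕ → ℂ) : ℝ :=
  l2norm x + l2norm (fun n => y n - OmegaF f x n)

noncomputable def N2 (g : ℕ → ℝ) : ℝ := Real.sqrt (∑' n, g n ^ 2)

lemma N2_nonneg (g : ℕ → ℝ) : 0 ≤ N2 g := Real.sqrt_nonneg _

lemma rpow_two_eq (x : ℝ) (_hx : 0 ≤ x) : x ^ ((2:ℝ≥0∞)).toReal = x ^ 2 := by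
  rw [show ((2:ℝ≥0∞)).toReal = ((2:ℕ):ℝ) by norm_num, Real.rpow_natCast]

lemma memℓp_two_iff_summable {E : Type*} [NormedAddCommGroup E] (u : ℕ → E) :
    Memℓp u 2 ↔ Summable (fun n => ‖u n‖ ^ 2) := by
  rw [memℓp_gen_iff (by norm_num : 0 < ((2:ℝ≥0∞)).toReal)]
  constructor <;> intro h <;>
  · convert h using 2 with n
    rw [rpow_two_eq _ (norm_nonneg _)]

lemma memℓp_real_of_sq {g : ℕ → ℝ} (hg : Summable fun n => g n ^ 2) : Memℓp g 2 := by
  rw [memℓp_two_iff_summable]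
  convert hg using 2 with n
  rw [Real.norm_eq_abs, _root_.sq_abs]

lemma N2_eq_norm (g : ℕ → ℝ) (hg : Summable fun n => g n ^ 2) :
    N2 g = ‖(⟨g, memℓp_real_of_sq hg⟩ : lp (fun _ : ℕ => ℝ) 2)‖ := by
  rw [lp.norm_eq_tsum_rpow (by norm_num : 0 < ((2:ℝ≥0∞)).toReal)]
  rw [N2, Real.sqrt_eq_rpow]
  have h1 : (1 / ((2:ℝ≥0∞)).toReal) = (1/2 : ℝ) := by norm_num
  rw [h1]
  congr 1
  apply tsum_congr; intro n
  rw [rpow_two_eq _ (norm_nonneg _)]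
  simp [Real.norm_eq_abs, _root_.sq_abs]

lemma N2_add_le (g h : ℕ → ℝ) (hg : Summable fun n => g n ^ 2)
    (hh : Summable fun n => h n ^ 2) :
    (Summable fun n => (g n + h n) ^ 2) ∧ N2 (fun n => g n + h n) ≤ N2 g + N2 h := by
  have hmem : Memℓp (fun n => g n + h n) 2 := by
    have := (memℓp_real_of_sq hg).add (memℓp_real_of_sq hh)
    exact this
  have hsumm : Summable fun n => (g n + h n) ^ 2 := by
    have := (memℓp_two_iff_summable (fun n => g n + h n)).1 hmem
    convert this using 2 with n
    rw [Real.norm_eq_abs, _root_.sq_abs]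
  refine ⟨hsumm, ?_⟩
  rw [N2_eq_norm _ hg, N2_eq_norm _ hh, N2_eq_norm _ hsumm]
  have heq : (⟨fun n => g n + h n, memℓp_real_of_sq hsumm⟩ : lp (fun _ : ℕ => ℝ) 2)
      = (⟨g, memℓp_real_of_sq hg⟩ : lp (fun _ : ℕ => ℝ) 2) + ⟨h, memℓp_real_of_sq hh⟩ := by
    apply lp.ext
    rw [lp.coeFn_add]
    rfl
  rw [heq]
  exact norm_add_le _ _

lemma N2_mono (g h : ℕ → ℝ) (hdom : ∀ n, |g n| ≤ h n) (hh : Summable fun n => h n ^ 2) :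
    (Summable fun n => g n ^ 2) ∧ N2 g ≤ N2 h := by
  have hsq : ∀ n, g n ^ 2 ≤ h n ^ 2 := fun n => by
    rw [← _root_.sq_abs (g n)]
    exact pow_le_pow_left₀ (_root_.abs_nonneg _) (hdom n) 2
  have hs : Summable fun n => g n ^ 2 :=
    Summable.of_nonneg_of_le (fun n => sq_nonneg _) hsq hh
  exact ⟨hs, Real.sqrt_le_sqrt (Summable.tsum_le_tsum hsq hs hh)⟩

lemma N2_const_mul (r : ℝ) (hr : 0 ≤ r) (g : ℕ → ℝ) :
    N2 (fun n => r * g n) = r * N2 g := by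
  unfold N2
  have : ∀ n, (r * g n) ^ 2 = r^2 * g n ^2 := fun n => by ring
  simp only [this]
  rw [tsum_mul_left, Real.sqrt_mul (sq_nonneg r), Real.sqrt_sq hr]

lemma coord_le (u : ℕ → ℂ) (su : Summable fun n => ‖u n‖ ^ 2) (n : ℕ) :
    ‖u n‖ ≤ l2norm u := by
  have h1 : ‖u n‖ ^ 2 ≤ ∑' m, ‖u m‖ ^ 2 :=
    Summable.le_tsum su n (fun m _ => sq_nonneg _)
  have := Real.sqrt_le_sqrt h1
  rwa [Real.sqrt_sq (norm_nonneg _)] at this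

lemma mul_log_le {P Q : ℝ} (hP : 0 < P) (hPQ : P ≤ Q) : P * (Real.log Q - Real.log P) ≤ Q := by
  have hQ : 0 < Q := lt_of_lt_of_le hP hPQ
  have h1 : Real.log Q - Real.log P = Real.log (Q / P) := (Real.log_div hQ.ne' hP.ne').symm
  have h2 : Real.log (Q / P) ≤ Q / P - 1 := Real.log_le_sub_one_of_pos (div_pos hQ hP)
  rw [h1]
  calc P * Real.log (Q / P) ≤ P * (Q / P - 1) := by
        exact mul_le_mul_of_nonneg_left h2 hP.le
    _ = Q - P := by field_simp
    _ ≤ Q := by linarith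

lemma abs_log_sub_le_one {u v : ℝ} (hu : 0 < u) (hv : 0 < v) (h1 : u ≤ 2 * v) (h2 : v ≤ 2 * u) :
    |Real.log u - Real.log v| ≤ 1 := by
  rw [_root_.abs_le]
  constructor
  · have := Real.log_le_sub_one_of_pos (div_pos hv hu)
    rw [Real.log_div hv.ne' hu.ne'] at this
    have : Real.log v - Real.log u ≤ v / u - 1 := this
    have hd : v / u ≤ 2 := by rw [div_le_iff₀ hu]; linarith
    linarith
  · have := Real.log_le_sub_one_of_pos (div_pos hu hv)
    rw [Real.log_div hu.ne' hv.ne'] at this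
    have hd : u / v ≤ 2 := by rw [div_le_iff₀ hv]; linarith
    linarith

lemma piece {P Q : ℝ} (r s : ℝ) (hP : 0 < P) (hQ : 0 < Q) (hr : 0 ≤ r) (hs : 0 ≤ s)
    (g u v : ℕ → ℝ) (hg0 : ∀ n, 0 ≤ g n)
    (hdu : ∀ n, g n ≤ |Real.log P - Real.log Q| * u n)
    (hdv : ∀ n, g n ≤ |Real.log P - Real.log Q| * v n)
    (su : Summable fun n => u n ^ 2) (sv : Summable fun n => v n ^ 2)
    (hNu : N2 u ≤ r * P) (hNv : N2 v ≤ s * Q) :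
    (Summable fun n => g n ^ 2) ∧ N2 g ≤ r * Q + s * P := by
  have hK : 0 ≤ |Real.log P - Real.log Q| := _root_.abs_nonneg _
  rcases le_total P Q with hPQ | hQP
  · have hKeq : |Real.log P - Real.log Q| = Real.log Q - Real.log P := by
      rw [_root_.abs_sub_comm, _root_.abs_of_nonneg (by linarith [Real.log_le_log hP hPQ])]
    obtain ⟨hsum, hle⟩ := N2_mono g (fun n => |Real.log P - Real.log Q| * u n)
      (fun n => by rw [_root_.abs_of_nonneg (hg0 n)]; exact hdu n)
      (by
        have : ∀ n, (|Real.log P - Real.log Q| * u n) ^ 2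
            = |Real.log P - Real.log Q| ^ 2 * u n ^ 2 := fun n => by ring
        simp only [this]; exact su.mul_left _)
    refine ⟨hsum, ?_⟩
    rw [N2_const_mul _ hK] at hle
    have h1 : |Real.log P - Real.log Q| * N2 u ≤ |Real.log P - Real.log Q| * (r * P) :=
      mul_le_mul_of_nonneg_left hNu hK
    have h2 : |Real.log P - Real.log Q| * (r * P) = r * (P * (Real.log Q - Real.log P)) := by
      rw [hKeq]; ring
    have h3 : r * (P * (Real.log Q - Real.log P)) ≤ r * Q :=
      mul_le_mul_of_nonneg_left (mul_log_le hP hPQ) hr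
    have h4 : 0 ≤ s * P := mul_nonneg hs hP.le
    linarith
  · have hKeq : |Real.log P - Real.log Q| = Real.log P - Real.log Q := by
      rw [_root_.abs_of_nonneg (by linarith [Real.log_le_log hQ hQP])]
    obtain ⟨hsum, hle⟩ := N2_mono g (fun n => |Real.log P - Real.log Q| * v n)
      (fun n => by rw [_root_.abs_of_nonneg (hg0 n)]; exact hdv n)
      (by
        have : ∀ n, (|Real.log P - Real.log Q| * v n) ^ 2
            = |Real.log P - Real.log Q| ^ 2 * v n ^ 2 := fun n => by ring
        simp only [this]; exact sv.mul_left _)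
    refine ⟨hsum, ?_⟩
    rw [N2_const_mul _ hK] at hle
    have h1 : |Real.log P - Real.log Q| * N2 v ≤ |Real.log P - Real.log Q| * (s * Q) :=
      mul_le_mul_of_nonneg_left hNv hK
    have h2 : |Real.log P - Real.log Q| * (s * Q) = s * (Q * (Real.log P - Real.log Q)) := by
      rw [hKeq]; ring
    have h3 : s * (Q * (Real.log P - Real.log Q)) ≤ s * P :=
      mul_le_mul_of_nonneg_left (mul_log_le hQ hQP) hs
    have h4 : 0 ≤ r * Q := mul_nonneg hr hQ.le
    linarith

lemma fdiff (L : ℝ) (f : ℝ → ℂ)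
    (hf : ∀ t s : ℝ, 0 ≤ t → 0 ≤ s → ‖f t - f s‖ ≤ L * |t - s|)
    (hL : 0 ≤ L) {U u V v : ℝ} (hu : 0 < u) (huU : u ≤ U) (hv : 0 < v) (hvV : v ≤ V) :
    ‖f (Real.log (U / u)) - f (Real.log (V / v))‖
      ≤ L * (|Real.log U - Real.log V| + |Real.log v - Real.log u|) := by
  have hU : 0 < U := lt_of_lt_of_le hu huU
  have hV : 0 < V := lt_of_lt_of_le hv hvV
  have h1 : 0 ≤ Real.log (U / u) := Real.log_nonneg ((one_le_div hu).2 huU)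
  have h2 : 0 ≤ Real.log (V / v) := Real.log_nonneg ((one_le_div hv).2 hvV)
  have h3 := hf _ _ h1 h2
  have h4 : |Real.log (U / u) - Real.log (V / v)|
      ≤ |Real.log U - Real.log V| + |Real.log v - Real.log u| := by
    rw [Real.log_div hU.ne' hu.ne', Real.log_div hV.ne' hv.ne']
    have : Real.log U - Real.log u - (Real.log V - Real.log v)
        = (Real.log U - Real.log V) + (Real.log v - Real.log u) := by ring
    rw [this]
    exact _root_.abs_add_le _ _
  calc ‖f (Real.log (U / u)) - f (Real.log (V / v))‖
      ≤ L * |Real.log (U / u) - Real.log (V / v)| := h3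
    _ ≤ L * (|Real.log U - Real.log V| + |Real.log v - Real.log u|) :=
        mul_le_mul_of_nonneg_left h4 hL

lemma extra_eh1 {u v : ℝ} (hu : 0 < u) (huv : u ≤ v) :
    u * |Real.log v - Real.log u| ≤ v := by
  rw [_root_.abs_of_nonneg (sub_nonneg.2 (Real.log_le_log hu huv))]
  exact mul_log_le hu huv

lemma extra_eh2 {u v : ℝ} (hu : 0 < u) (hv : 0 < v) (h1 : u ≤ 2 * v) (h2 : v ≤ 2 * u) :
    u * |Real.log u - Real.log v| ≤ u := by
  have := abs_log_sub_le_one hu hv h1 h2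
  calc u * |Real.log u - Real.log v| ≤ u * 1 :=
        mul_le_mul_of_nonneg_left this hu.le
    _ = u := mul_one u

lemma extra_eh3 {a c b : ℝ} (ha : 0 < a) (hc : 0 < c) (hb : 0 ≤ b)
    (h1 : a ≤ 2 * c) (h2 : c ≤ a + b) :
    a * |Real.log a - Real.log c| ≤ a + b := by
  rcases le_total a c with h | h
  · rw [_root_.abs_sub_comm]
    calc a * |Real.log c - Real.log a| ≤ c := extra_eh1 ha h
      _ ≤ a + b := h2
  · have h3 : c ≤ 2 * a := by linarith
    calc a * |Real.log a - Real.log c| ≤ a := by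
          have := abs_log_sub_le_one ha hc (by linarith) (by linarith)
          calc a * |Real.log a - Real.log c| ≤ a * 1 :=
                mul_le_mul_of_nonneg_left this ha.le
            _ = a := mul_one a
      _ ≤ a + b := by linarith

lemma prod_bound (L : ℝ) (hL : 0 ≤ L) (f : ℝ → ℂ)
    (hf : ∀ t s : ℝ, 0 ≤ t → 0 ≤ s → ‖f t - f s‖ ≤ L * |t - s|)
    {U u V v w0 e : ℝ} (hu : 0 < u) (huU : u ≤ U) (hv : 0 < v) (hvV : v ≤ V)
    (m : ℂ) (hm : ‖m‖ = w0)
    (he : w0 * |Real.log v - Real.log u| ≤ e) :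
    ‖m * (f (Real.log (U / u)) - f (Real.log (V / v)))‖
      ≤ L * (w0 * |Real.log U - Real.log V|) + L * e := by
  have hw0 : 0 ≤ w0 := hm ▸ norm_nonneg _
  rw [norm_mul, hm]
  have h := fdiff L f hf hL hu huU hv hvV
  calc w0 * ‖f (Real.log (U / u)) - f (Real.log (V / v))‖
      ≤ w0 * (L * (|Real.log U - Real.log V| + |Real.log v - Real.log u|)) :=
        mul_le_mul_of_nonneg_left h hw0
    _ = L * (w0 * |Real.log U - Real.log V|) + L * (w0 * |Real.log v - Real.log u|) := by ring
    _ ≤ L * (w0 * |Real.log U - Real.log V|) + L * e := by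
        have := mul_le_mul_of_nonneg_left he hL
        linarith

set_option maxHeartbeats 1000000 in
lemma pointwise (L : ℝ) (hL : 0 ≤ L) (f : ℝ → ℂ)
    (hf : ∀ t s : ℝ, 0 ≤ t → 0 ≤ s → ‖f t - f s‖ ≤ L * |t - s|)
    {X Z W : ℝ} (hX : 0 < X) (hZ : 0 < Z) (hW : 0 < W)
    (p q : ℂ) (hp : ‖p‖ ≤ X) (hq : ‖q‖ ≤ Z)
    (hpq : ‖p + q‖ ≤ W) :
    ‖(if p + q = 0 then 0 else (p + q) * f (Real.log (W / ‖p + q‖)))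
        - (if p = 0 then 0 else p * f (Real.log (X / ‖p‖)))
        - (if q = 0 then 0 else q * f (Real.log (Z / ‖q‖)))‖
      ≤ L * ((if 2 * ‖p + q‖ < ‖p‖ then 0
              else if 2 * ‖p + q‖ < ‖q‖ then 0
              else ‖p‖ * |Real.log W - Real.log X|)
           + (if 2 * ‖p + q‖ < ‖p‖ then 0
              else if 2 * ‖p + q‖ < ‖q‖ then 0
              else ‖q‖ * |Real.log W - Real.log Z|)
           + (if 2 * ‖p + q‖ < ‖p‖
              then ‖p + q‖ * |Real.log W - Real.log Z| else 0)
           + (if 2 * ‖p + q‖ < ‖p‖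
              then ‖p‖ * |Real.log X - Real.log Z| else 0)
           + (if 2 * ‖p + q‖ < ‖p‖ then 0
              else if 2 * ‖p + q‖ < ‖q‖
              then ‖p + q‖ * |Real.log W - Real.log X| else 0)
           + (if 2 * ‖p + q‖ < ‖p‖ then 0
              else if 2 * ‖p + q‖ < ‖q‖
              then ‖q‖ * |Real.log X - Real.log Z| else 0)
           + 2 * (‖p‖ + ‖q‖)) := by
  by_cases hp0 : p = 0
  · -- p = 0
    subst hp0
    by_cases hq0 : q = 0
    · subst hq0
      norm_num
    · have hb : 0 < ‖q‖ := norm_pos_iff.2 hq0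
      have hn1 : ¬ (2 * ‖q‖ < (0:ℝ)) := by push_neg; positivity
      have hn2 : ¬ (2 * ‖q‖ < ‖q‖) := by push_neg; linarith
      rw [zero_add] at hpq
      simp only [zero_add, norm_zero, if_neg hq0, if_neg hn1, if_neg hn2,
        zero_mul, ite_self, eq_self_iff_true, if_true, add_zero]
      have hexpr : q * f (Real.log (W / ‖q‖)) - 0 -
          q * f (Real.log (Z / ‖q‖))
          = q * (f (Real.log (W / ‖q‖)) - f (Real.log (Z / ‖q‖))) := by
        ring
      rw [hexpr]
      have hb1 := prod_bound L hL f hf hb hpq hb hq q rfl (e := 0)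
        (by rw [sub_self, _root_.abs_zero, mul_zero])
      have e1 : 0 ≤ L * ‖q‖ := by positivity
      nlinarith [hb1]
  by_cases hq0 : q = 0
  · subst hq0
    have ha : 0 < ‖p‖ := norm_pos_iff.2 hp0
    have hn1 : ¬ (2 * ‖p‖ < ‖p‖) := by push_neg; linarith
    have hn2 : ¬ (2 * ‖p‖ < (0:ℝ)) := by push_neg; positivity
    rw [add_zero] at hpq
    simp only [add_zero, norm_zero, if_neg hp0, if_neg hn1, if_neg hn2,
      zero_mul, ite_self, eq_self_iff_true, if_true, zero_add]
    have hexpr : p * f (Real.log (W / ‖p‖)) -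
        p * f (Real.log (X / ‖p‖)) - 0
        = p * (f (Real.log (W / ‖p‖)) - f (Real.log (X / ‖p‖))) := by
      ring
    rw [hexpr]
    have hb1 := prod_bound L hL f hf ha hpq ha hp p rfl (e := 0)
      (by rw [sub_self, _root_.abs_zero, mul_zero])
    have e1 : 0 ≤ L * ‖p‖ := by positivity
    nlinarith [hb1]
  -- now p ≠ 0 and q ≠ 0
  have ha : 0 < ‖p‖ := norm_pos_iff.2 hp0
  have hb : 0 < ‖q‖ := norm_pos_iff.2 hq0
  have hc0 : 0 ≤ ‖p + q‖ := norm_nonneg _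
  have hcab : ‖p + q‖ ≤ ‖p‖ + ‖q‖ :=
    norm_add_le _ _
  have hacb : ‖p‖ ≤ ‖p + q‖ + ‖q‖ := by
    have h1 : p = (p + q) + (-q) := by ring
    calc ‖p‖ = ‖(p + q) + (-q)‖ := by rw [← h1]
      _ ≤ ‖p + q‖ + ‖-q‖ := norm_add_le _ _
      _ = ‖p + q‖ + ‖q‖ := by rw [norm_neg]
  have hbca : ‖q‖ ≤ ‖p‖ + ‖p + q‖ := by
    have h1 : q = (p + q) + (-p) := by ring
    calc ‖q‖ = ‖(p + q) + (-p)‖ := by rw [← h1]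
      _ ≤ ‖p + q‖ + ‖-p‖ := norm_add_le _ _
      _ = ‖p‖ + ‖p + q‖ := by rw [norm_neg]; ring
  by_cases h2 : 2 * ‖p + q‖ < ‖p‖
  · -- case 2 : |p+q| small compared to |p|
    simp only [if_pos h2, if_neg hp0, if_neg hq0]
    have hcb : ‖p + q‖ < ‖q‖ := by linarith
    have hab1 : ‖p‖ < 2 * ‖q‖ := by linarith
    have hba1 : ‖q‖ < 2 * ‖p‖ := by linarith
    by_cases hr : p + q = 0
    · rw [if_pos hr]
      have hqe : q = -p := by
        have := hr; linear_combination this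
      have habs : ‖q‖ = ‖p‖ := by rw [hqe, norm_neg]
      have hexpr : (0:ℂ) - p * f (Real.log (X / ‖p‖))
          - q * f (Real.log (Z / ‖q‖))
          = p * (f (Real.log (Z / ‖q‖)) - f (Real.log (X / ‖p‖))) := by
        rw [hqe]; ring
      rw [hexpr]
      have hb1 := prod_bound L hL f hf hb hq ha hp p rfl (e := 0)
        (by rw [← habs, sub_self, _root_.abs_zero, mul_zero])
      have hsw : |Real.log Z - Real.log X| = |Real.log X - Real.log Z| :=
        _root_.abs_sub_comm _ _
      rw [hsw] at hb1
      have e1 : 0 ≤ L * (‖p+q‖ * |Real.log W - Real.log Z|) := by positivity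
      have e2 : 0 ≤ L * (2 * (‖p‖ + ‖q‖)) := by positivity
      nlinarith [hb1]
    · rw [if_neg hr]
      have hc : 0 < ‖p + q‖ := norm_pos_iff.2 hr
      have hexpr : (p + q) * f (Real.log (W / ‖p + q‖))
          - p * f (Real.log (X / ‖p‖)) - q * f (Real.log (Z / ‖q‖))
          = (p + q) * (f (Real.log (W / ‖p + q‖)) - f (Real.log (Z / ‖q‖)))
            + p * (f (Real.log (Z / ‖q‖)) - f (Real.log (X / ‖p‖))) := by
        ring
      rw [hexpr]
      have hb1 := prod_bound L hL f hf hc hpq hb hq (p + q) rfl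
        (e := ‖q‖) (extra_eh1 hc hcb.le)
      have hb2 := prod_bound L hL f hf hb hq ha hp p rfl
        (e := ‖p‖)
        (extra_eh2 ha hb hab1.le hba1.le)
      have htri := norm_add_le
        ((p + q) * (f (Real.log (W / ‖p + q‖)) - f (Real.log (Z / ‖q‖))))
        (p * (f (Real.log (Z / ‖q‖)) - f (Real.log (X / ‖p‖))))
      have hsw : |Real.log Z - Real.log X| = |Real.log X - Real.log Z| :=
        _root_.abs_sub_comm _ _
      rw [hsw] at hb2
      nlinarith [hb1, hb2, htri]
  by_cases h3 : 2 * ‖p + q‖ < ‖q‖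
  · -- case 3 : |p+q| small compared to |q|
    simp only [if_neg h2, if_pos h3, if_neg hp0, if_neg hq0]
    have hca : ‖p + q‖ < ‖p‖ := by linarith
    have hab1 : ‖p‖ < 2 * ‖q‖ := by linarith
    have hba1 : ‖q‖ < 2 * ‖p‖ := by linarith
    by_cases hr : p + q = 0
    · rw [if_pos hr]
      have hqe : q = -p := by linear_combination hr
      have habs : ‖q‖ = ‖p‖ := by rw [hqe, norm_neg]
      have hexpr : (0:ℂ) - p * f (Real.log (X / ‖p‖))
          - q * f (Real.log (Z / ‖q‖))
          = p * (f (Real.log (Z / ‖q‖)) - f (Real.log (X / ‖p‖))) := by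
        rw [hqe]; ring
      rw [hexpr]
      have hb1 := prod_bound L hL f hf hb hq ha hp p rfl (e := 0)
        (by rw [← habs, sub_self, _root_.abs_zero, mul_zero])
      have hsw : |Real.log Z - Real.log X| = |Real.log X - Real.log Z| :=
        _root_.abs_sub_comm _ _
      rw [hsw] at hb1
      have e1 : 0 ≤ L * (‖p + q‖ * |Real.log W - Real.log X|) := by positivity
      have e2 : 0 ≤ L * (2 * (‖p‖ + ‖q‖)) := by positivity
      have habq : ‖p‖ * |Real.log X - Real.log Z|
          = ‖q‖ * |Real.log X - Real.log Z| := by rw [habs]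
      nlinarith [hb1]
    · rw [if_neg hr]
      have hc : 0 < ‖p + q‖ := norm_pos_iff.2 hr
      have hexpr : (p + q) * f (Real.log (W / ‖p + q‖))
          - p * f (Real.log (X / ‖p‖)) - q * f (Real.log (Z / ‖q‖))
          = (p + q) * (f (Real.log (W / ‖p + q‖)) - f (Real.log (X / ‖p‖)))
            + q * (f (Real.log (X / ‖p‖)) - f (Real.log (Z / ‖q‖))) := by
        ring
      rw [hexpr]
      have hb1 := prod_bound L hL f hf hc hpq ha hp (p + q) rfl
        (e := ‖p‖) (extra_eh1 hc hca.le)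
      have hb2 := prod_bound L hL f hf ha hp hb hq q rfl
        (e := ‖q‖)
        (extra_eh2 hb ha hba1.le hab1.le)
      have htri := norm_add_le
        ((p + q) * (f (Real.log (W / ‖p + q‖)) - f (Real.log (X / ‖p‖))))
        (q * (f (Real.log (X / ‖p‖)) - f (Real.log (Z / ‖q‖))))
      nlinarith [hb1, hb2, htri]
  · -- case 1 : |p+q| comparable
    simp only [if_neg h2, if_neg h3, if_neg hp0, if_neg hq0]
    push_neg at h2 h3
    have hc : 0 < ‖p + q‖ := by linarith
    have hr : p + q ≠ 0 := fun h => by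
      rw [h, norm_zero] at hc; exact lt_irrefl _ hc
    rw [if_neg hr]
    have hexpr : (p + q) * f (Real.log (W / ‖p + q‖))
        - p * f (Real.log (X / ‖p‖)) - q * f (Real.log (Z / ‖q‖))
        = p * (f (Real.log (W / ‖p + q‖)) - f (Real.log (X / ‖p‖)))
          + q * (f (Real.log (W / ‖p + q‖)) - f (Real.log (Z / ‖q‖))) := by
      ring
    rw [hexpr]
    have hb1 := prod_bound L hL f hf hc hpq ha hp p rfl
      (e := ‖p‖ + ‖q‖)
      (extra_eh3 ha hc hb.le h2 (by linarith))
    have he2 : ‖q‖ * |Real.log (‖q‖) - Real.log (‖p + q‖)|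
        ≤ ‖q‖ + ‖p‖ :=
      extra_eh3 hb hc ha.le h3 (by linarith)
    have hb2 := prod_bound L hL f hf hc hpq hb hq q rfl he2
    have htri := norm_add_le
      (p * (f (Real.log (W / ‖p + q‖)) - f (Real.log (X / ‖p‖))))
      (q * (f (Real.log (W / ‖p + q‖)) - f (Real.log (Z / ‖q‖))))
    nlinarith [hb1, hb2, htri]

lemma l2norm_nonneg (u : ℕ → ℂ) : 0 ≤ l2norm u := Real.sqrt_nonneg _

lemma l2norm_eq_N2 (u : ℕ → ℂ) : l2norm u = N2 (fun n => ‖u n‖) := rfl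

lemma piece' {P Q : ℝ} (r s : ℝ) (hP : 0 < P) (hQ : 0 < Q) (hr : 0 ≤ r) (hs : 0 ≤ s)
    (g : ℕ → ℝ) (u v : ℕ → ℂ) (hg0 : ∀ n, 0 ≤ g n)
    (hdu : ∀ n, g n ≤ |Real.log P - Real.log Q| * (r * ‖u n‖))
    (hdv : ∀ n, g n ≤ |Real.log P - Real.log Q| * (s * ‖v n‖))
    (su : Summable fun n => ‖u n‖ ^ 2)
    (sv : Summable fun n => ‖v n‖ ^ 2)
    (hNu : l2norm u ≤ P) (hNv : l2norm v ≤ Q) :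
    (Summable fun n => g n ^ 2) ∧ N2 g ≤ r * Q + s * P := by
  apply piece r s hP hQ hr hs g (fun n => r * ‖u n‖) (fun n => s * ‖v n‖)
    hg0 hdu hdv
  · have h : (fun n => (r * ‖u n‖) ^ 2) = fun n => r ^ 2 * ‖u n‖ ^ 2 :=
      funext fun n => by ring
    rw [h]; exact su.mul_left _
  · have h : (fun n => (s * ‖v n‖) ^ 2) = fun n => s ^ 2 * ‖v n‖ ^ 2 :=
      funext fun n => by ring
    rw [h]; exact sv.mul_left _
  · rw [N2_const_mul r hr]
    exact mul_le_mul_of_nonneg_left hNu hr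
  · rw [N2_const_mul s hs]
    exact mul_le_mul_of_nonneg_left hNv hs

lemma summable_two_mul_add (x z : ℕ → ℂ)
    (sx : Summable fun n => ‖x n‖ ^ 2)
    (sz : Summable fun n => ‖z n‖ ^ 2) :
    (Summable fun n => (2 * (‖x n‖ + ‖z n‖)) ^ 2) := by
  obtain ⟨hs, _⟩ := N2_add_le (fun n => ‖x n‖) (fun n => ‖z n‖) sx sz
  have h : (fun n => (2 * (‖x n‖ + ‖z n‖)) ^ 2)
      = fun n => 4 * (‖x n‖ + ‖z n‖) ^ 2 := funext fun n => by ring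
  rw [h]; exact hs.mul_left _

set_option maxHeartbeats 2000000 in
lemma key (L : ℝ) (hL : 0 ≤ L) (f : ℝ → ℂ)
    (hf : ∀ t s : ℝ, 0 ≤ t → 0 ≤ s → ‖f t - f s‖ ≤ L * |t - s|)
    (x z : ℕ → ℂ)
    (sx : Summable fun n => ‖x n‖ ^ 2)
    (sz : Summable fun n => ‖z n‖ ^ 2) :
    (Summable fun n =>
      ‖OmegaF f (fun m => x m + z m) n - OmegaF f x n - OmegaF f z n‖ ^ 2) ∧
    l2norm (fun n => OmegaF f (fun m => x m + z m) n - OmegaF f x n - OmegaF f z n)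
      ≤ 12 * L * (l2norm x + l2norm z) := by
  have habs0 : ∀ (u : ℕ → ℂ) (hu : ∀ n, OmegaF f (fun m => x m + z m) n - OmegaF f x n
      - OmegaF f z n = 0), (Summable fun n =>
      ‖OmegaF f (fun m => x m + z m) n - OmegaF f x n - OmegaF f z n‖ ^ 2) ∧
      l2norm (fun n => OmegaF f (fun m => x m + z m) n - OmegaF f x n - OmegaF f z n)
      ≤ 12 * L * (l2norm x + l2norm z) := by
    intro u hu
    have h1 : (fun n => ‖OmegaF f (fun m => x m + z m) n - OmegaF f x n
        - OmegaF f z n‖ ^ 2) = fun _ => (0:ℝ) := funext fun n => by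
      rw [hu n, norm_zero]; norm_num
    constructor
    · rw [h1]; exact summable_zero
    · have h2 : l2norm (fun n => OmegaF f (fun m => x m + z m) n - OmegaF f x n
          - OmegaF f z n) = 0 := by
        rw [l2norm]
        have := h1
        simp only [hu, norm_zero]
        simp
      rw [h2]
      have := l2norm_nonneg x
      have := l2norm_nonneg z
      positivity
  by_cases hx0 : ∀ n, x n = 0
  · apply habs0 x
    intro n
    have hw : (fun m => x m + z m) = z := funext fun m => by rw [hx0 m, zero_add]
    rw [hw]
    have : OmegaF f x n = 0 := by simp [OmegaF, hx0 n]
    rw [this]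
    ring
  by_cases hz0 : ∀ n, z n = 0
  · apply habs0 x
    intro n
    have hw : (fun m => x m + z m) = x := funext fun m => by rw [hz0 m, add_zero]
    rw [hw]
    have : OmegaF f z n = 0 := by simp [OmegaF, hz0 n]
    rw [this]
    ring
  by_cases hw0 : ∀ n, x n + z n = 0
  · apply habs0 x
    intro n
    have hzx : ∀ m, z m = -x m := fun m => by linear_combination hw0 m
    have hXZ : l2norm z = l2norm x := by
      rw [l2norm, l2norm]
      congr 1
      exact tsum_congr fun m => by rw [hzx m, norm_neg]
    have h1 : OmegaF f (fun m => x m + z m) n = 0 := by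
      simp only [OmegaF, hw0 n, if_pos]
    have h2 : OmegaF f z n = - OmegaF f x n := by
      by_cases hxn : x n = 0
      · simp [OmegaF, hxn, hzx n]
      · simp only [OmegaF, hzx n, neg_eq_zero, if_neg hxn, norm_neg, hXZ]
        ring
    rw [h1, h2]
    ring
  -- main case
  push_neg at hx0 hz0 hw0
  obtain ⟨n1, hn1⟩ := hx0
  obtain ⟨n2, hn2⟩ := hz0
  obtain ⟨n3, hn3⟩ := hw0
  have hX : 0 < l2norm x := lt_of_lt_of_le (norm_pos_iff.2 hn1) (coord_le x sx n1)
  have hZ : 0 < l2norm z := lt_of_lt_of_le (norm_pos_iff.2 hn2) (coord_le z sz n2)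
  obtain ⟨sab, hab⟩ := N2_add_le (fun n => ‖x n‖) (fun n => ‖z n‖) sx sz
  obtain ⟨sw, hwle0⟩ := N2_mono (fun n => ‖x n + z n‖)
      (fun n => ‖x n‖ + ‖z n‖)
      (fun n => by
        rw [_root_.abs_of_nonneg (norm_nonneg _)]
        exact norm_add_le _ _) sab
  have hWle : l2norm (fun m => x m + z m) ≤ l2norm x + l2norm z := le_trans hwle0 hab
  have hW : 0 < l2norm (fun m => x m + z m) :=
    lt_of_lt_of_le (norm_pos_iff.2 hn3) (coord_le (fun m => x m + z m) sw n3)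
  set KWX := |Real.log (l2norm (fun m => x m + z m)) - Real.log (l2norm x)| with hKWX
  set KWZ := |Real.log (l2norm (fun m => x m + z m)) - Real.log (l2norm z)| with hKWZ
  set KXZ := |Real.log (l2norm x) - Real.log (l2norm z)| with hKXZ
  set E1 : ℕ → ℝ := fun n =>
    if 2 * ‖x n + z n‖ < ‖x n‖ then 0
    else if 2 * ‖x n + z n‖ < ‖z n‖ then 0
    else ‖x n‖ * KWX with hE1
  set E2 : ℕ → ℝ := fun n =>
    if 2 * ‖x n + z n‖ < ‖x n‖ then 0
    else if 2 * ‖x n + z n‖ < ‖z n‖ then 0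
    else ‖z n‖ * KWZ with hE2
  set E3 : ℕ → ℝ := fun n =>
    if 2 * ‖x n + z n‖ < ‖x n‖
    then ‖x n + z n‖ * KWZ else 0 with hE3
  set E4 : ℕ → ℝ := fun n =>
    if 2 * ‖x n + z n‖ < ‖x n‖
    then ‖x n‖ * KXZ else 0 with hE4
  set E5 : ℕ → ℝ := fun n =>
    if 2 * ‖x n + z n‖ < ‖x n‖ then 0
    else if 2 * ‖x n + z n‖ < ‖z n‖
    then ‖x n + z n‖ * KWX else 0 with hE5
  set E6 : ℕ → ℝ := fun n =>
    if 2 * ‖x n + z n‖ < ‖x n‖ then 0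
    else if 2 * ‖x n + z n‖ < ‖z n‖
    then ‖z n‖ * KXZ else 0 with hE6
  set E7 : ℕ → ℝ := fun n => 2 * (‖x n‖ + ‖z n‖) with hE7
  have hpt : ∀ n, ‖OmegaF f (fun m => x m + z m) n - OmegaF f x n - OmegaF f z n‖
      ≤ L * (E1 n + E2 n + E3 n + E4 n + E5 n + E6 n + E7 n) := by
    intro n
    have h := pointwise L hL f hf hX hZ hW (x n) (z n) (coord_le x sx n) (coord_le z sz n)
      (coord_le (fun m => x m + z m) sw n)
    simp only [hE1, hE2, hE3, hE4, hE5, hE6, hE7, hKWX, hKWZ, hKXZ, OmegaF]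
    exact h
  -- bounds for each piece
  have habsnn : ∀ (m : ℂ) (K : ℝ), 0 ≤ |K| * ‖m‖ :=
    fun m K => mul_nonneg (_root_.abs_nonneg _) (norm_nonneg _)
  obtain ⟨s1, b1⟩ := piece' 2 1 hW hX (by norm_num) (by norm_num) E1
    (fun m => x m + z m) x
    (fun n => by rw [hE1]; dsimp only; split_ifs with h h'
                 · exact le_refl 0
                 · exact le_refl 0
                 · exact mul_nonneg (norm_nonneg _) (_root_.abs_nonneg _))
    (fun n => by rw [hE1]; dsimp only; split_ifs with h h'
                 · positivity
                 · positivity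
                 · calc ‖x n‖ * KWX ≤ (2 * ‖x n + z n‖) * KWX :=
                        mul_le_mul_of_nonneg_right (not_lt.1 h) (_root_.abs_nonneg _)
                     _ = KWX * (2 * ‖x n + z n‖) := mul_comm _ _)
    (fun n => by rw [hE1]; dsimp only; split_ifs with h h'
                 · positivity
                 · positivity
                 · calc ‖x n‖ * KWX = KWX * (1 * ‖x n‖) := by ring
                     _ ≤ KWX * (1 * ‖x n‖) := le_refl _)
    sw sx le_rfl le_rfl
  obtain ⟨s2, b2⟩ := piece' 2 1 hW hZ (by norm_num) (by norm_num) E2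
    (fun m => x m + z m) z
    (fun n => by rw [hE2]; dsimp only; split_ifs with h h'
                 · exact le_refl 0
                 · exact le_refl 0
                 · exact mul_nonneg (norm_nonneg _) (_root_.abs_nonneg _))
    (fun n => by rw [hE2]; dsimp only; split_ifs with h h'
                 · positivity
                 · positivity
                 · calc ‖z n‖ * KWZ ≤ (2 * ‖x n + z n‖) * KWZ :=
                        mul_le_mul_of_nonneg_right (not_lt.1 h') (_root_.abs_nonneg _)
                     _ = KWZ * (2 * ‖x n + z n‖) := mul_comm _ _)
    (fun n => by rw [hE2]; dsimp only; split_ifs with h h'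
                 · positivity
                 · positivity
                 · calc ‖z n‖ * KWZ = KWZ * (1 * ‖z n‖) := by ring
                     _ ≤ KWZ * (1 * ‖z n‖) := le_refl _)
    sw sz le_rfl le_rfl
  obtain ⟨s3, b3⟩ := piece' 1 1 hW hZ (by norm_num) (by norm_num) E3
    (fun m => x m + z m) z
    (fun n => by rw [hE3]; dsimp only; split_ifs with h
                 · exact mul_nonneg (norm_nonneg _) (_root_.abs_nonneg _)
                 · exact le_refl 0)
    (fun n => by rw [hE3]; dsimp only; split_ifs with h
                 · calc ‖x n + z n‖ * KWZ
                        = KWZ * (1 * ‖x n + z n‖) := by ring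
                     _ ≤ KWZ * (1 * ‖x n + z n‖) := le_refl _
                 · positivity)
    (fun n => by rw [hE3]; dsimp only; split_ifs with h
                 · have hcb : ‖x n + z n‖ ≤ ‖z n‖ := by
                     have h1 : ‖x n‖ ≤ ‖x n + z n‖ + ‖z n‖ := by
                       have h2 : x n = (x n + z n) + (-z n) := by ring
                       calc ‖x n‖ = ‖(x n + z n) + (-z n)‖ := by rw [← h2]
                         _ ≤ ‖x n + z n‖ + ‖-z n‖ :=
                            norm_add_le _ _
                         _ = ‖x n + z n‖ + ‖z n‖ := by
                            rw [norm_neg]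
                     linarith
                   calc ‖x n + z n‖ * KWZ ≤ ‖z n‖ * KWZ :=
                        mul_le_mul_of_nonneg_right hcb (_root_.abs_nonneg _)
                     _ = KWZ * (1 * ‖z n‖) := by ring
                 · positivity)
    sw sz le_rfl le_rfl
  obtain ⟨s4, b4⟩ := piece' 1 2 hX hZ (by norm_num) (by norm_num) E4
    x z
    (fun n => by rw [hE4]; dsimp only; split_ifs with h
                 · exact mul_nonneg (norm_nonneg _) (_root_.abs_nonneg _)
                 · exact le_refl 0)
    (fun n => by rw [hE4]; dsimp only; split_ifs with h
                 · calc ‖x n‖ * KXZ = KXZ * (1 * ‖x n‖) := by ring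
                     _ ≤ KXZ * (1 * ‖x n‖) := le_refl _
                 · positivity)
    (fun n => by rw [hE4]; dsimp only; split_ifs with h
                 · have hab2 : ‖x n‖ ≤ 2 * ‖z n‖ := by
                     have h1 : ‖x n‖ ≤ ‖x n + z n‖ + ‖z n‖ := by
                       have h2 : x n = (x n + z n) + (-z n) := by ring
                       calc ‖x n‖ = ‖(x n + z n) + (-z n)‖ := by rw [← h2]
                         _ ≤ ‖x n + z n‖ + ‖-z n‖ :=
                            norm_add_le _ _
                         _ = ‖x n + z n‖ + ‖z n‖ := by
                            rw [norm_neg]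
                     linarith
                   calc ‖x n‖ * KXZ ≤ (2 * ‖z n‖) * KXZ :=
                        mul_le_mul_of_nonneg_right hab2 (_root_.abs_nonneg _)
                     _ = KXZ * (2 * ‖z n‖) := mul_comm _ _
                 · positivity)
    sx sz le_rfl le_rfl
  obtain ⟨s5, b5⟩ := piece' 1 1 hW hX (by norm_num) (by norm_num) E5
    (fun m => x m + z m) x
    (fun n => by rw [hE5]; dsimp only; split_ifs with h h'
                 · exact le_refl 0
                 · exact mul_nonneg (norm_nonneg _) (_root_.abs_nonneg _)
                 · exact le_refl 0)
    (fun n => by rw [hE5]; dsimp only; split_ifs with h h'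
                 · positivity
                 · calc ‖x n + z n‖ * KWX
                        = KWX * (1 * ‖x n + z n‖) := by ring
                     _ ≤ KWX * (1 * ‖x n + z n‖) := le_refl _
                 · positivity)
    (fun n => by rw [hE5]; dsimp only; split_ifs with h h'
                 · positivity
                 · have hca : ‖x n + z n‖ ≤ ‖x n‖ := by
                     have h1 : ‖z n‖ ≤ ‖x n‖ + ‖x n + z n‖ := by
                       have h2 : z n = (x n + z n) + (-x n) := by ring
                       calc ‖z n‖ = ‖(x n + z n) + (-x n)‖ := by rw [← h2]
                         _ ≤ ‖x n + z n‖ + ‖-x n‖ :=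
                            norm_add_le _ _
                         _ = ‖x n‖ + ‖x n + z n‖ := by
                            rw [norm_neg]; ring
                     linarith
                   calc ‖x n + z n‖ * KWX ≤ ‖x n‖ * KWX :=
                        mul_le_mul_of_nonneg_right hca (_root_.abs_nonneg _)
                     _ = KWX * (1 * ‖x n‖) := by ring
                 · positivity)
    sw sx le_rfl le_rfl
  obtain ⟨s6, b6⟩ := piece' 2 1 hX hZ (by norm_num) (by norm_num) E6
    x z
    (fun n => by rw [hE6]; dsimp only; split_ifs with h h'
                 · exact le_refl 0
                 · exact mul_nonneg (norm_nonneg _) (_root_.abs_nonneg _)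
                 · exact le_refl 0)
    (fun n => by rw [hE6]; dsimp only; split_ifs with h h'
                 · positivity
                 · have hba2 : ‖z n‖ ≤ 2 * ‖x n‖ := by
                     have h1 : ‖z n‖ ≤ ‖x n‖ + ‖x n + z n‖ := by
                       have h2 : z n = (x n + z n) + (-x n) := by ring
                       calc ‖z n‖ = ‖(x n + z n) + (-x n)‖ := by rw [← h2]
                         _ ≤ ‖x n + z n‖ + ‖-x n‖ :=
                            norm_add_le _ _
                         _ = ‖x n‖ + ‖x n + z n‖ := by
                            rw [norm_neg]; ring
                     linarith
                   calc ‖z n‖ * KXZ ≤ (2 * ‖x n‖) * KXZ :=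
                        mul_le_mul_of_nonneg_right hba2 (_root_.abs_nonneg _)
                     _ = KXZ * (2 * ‖x n‖) := mul_comm _ _
                 · positivity)
    (fun n => by rw [hE6]; dsimp only; split_ifs with h h'
                 · positivity
                 · calc ‖z n‖ * KXZ = KXZ * (1 * ‖z n‖) := by ring
                     _ ≤ KXZ * (1 * ‖z n‖) := le_refl _
                 · positivity)
    sx sz le_rfl le_rfl
  have s7 : Summable fun n => E7 n ^ 2 := by
    rw [hE7]; exact summable_two_mul_add x z sx sz
  have b7 : N2 E7 ≤ 2 * (l2norm x + l2norm z) := by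
    rw [hE7]
    have := N2_const_mul 2 (by norm_num)
      (fun n => ‖x n‖ + ‖z n‖)
    rw [this]
    exact mul_le_mul_of_nonneg_left hab (by norm_num)
  -- combine
  obtain ⟨s12, h12⟩ := N2_add_le E1 E2 s1 s2
  obtain ⟨s13, h13⟩ := N2_add_le (fun n => E1 n + E2 n) E3 s12 s3
  obtain ⟨s14, h14⟩ := N2_add_le (fun n => E1 n + E2 n + E3 n) E4 s13 s4
  obtain ⟨s15, h15⟩ := N2_add_le (fun n => E1 n + E2 n + E3 n + E4 n) E5 s14 s5
  obtain ⟨s16, h16⟩ := N2_add_le (fun n => E1 n + E2 n + E3 n + E4 n + E5 n) E6 s15 s6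
  obtain ⟨s17, h17⟩ := N2_add_le (fun n => E1 n + E2 n + E3 n + E4 n + E5 n + E6 n) E7 s16 s7
  have hNE : N2 (fun n => E1 n + E2 n + E3 n + E4 n + E5 n + E6 n + E7 n)
      ≤ 12 * (l2norm x + l2norm z) := by
    have hW4 : 4 * l2norm (fun m => x m + z m) ≤ 4 * (l2norm x + l2norm z) := by linarith
    linarith [h12, h13, h14, h15, h16, h17, b1, b2, b3, b4, b5, b6, b7]
  have hLsum : Summable fun n =>
      (L * (E1 n + E2 n + E3 n + E4 n + E5 n + E6 n + E7 n)) ^ 2 := by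
    have h : (fun n => (L * (E1 n + E2 n + E3 n + E4 n + E5 n + E6 n + E7 n)) ^ 2)
        = fun n => L ^ 2 * (E1 n + E2 n + E3 n + E4 n + E5 n + E6 n + E7 n) ^ 2 :=
      funext fun n => by ring
    rw [h]
    exact s17.mul_left _
  obtain ⟨sD, hD⟩ := N2_mono
    (fun n => ‖OmegaF f (fun m => x m + z m) n - OmegaF f x n - OmegaF f z n‖)
    (fun n => L * (E1 n + E2 n + E3 n + E4 n + E5 n + E6 n + E7 n))
    (fun n => by
      rw [_root_.abs_of_nonneg (norm_nonneg _)]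
      exact hpt n) hLsum
  refine ⟨sD, ?_⟩
  rw [l2norm_eq_N2]
  have hconst : N2 (fun n => L * (E1 n + E2 n + E3 n + E4 n + E5 n + E6 n + E7 n))
      = L * N2 (fun n => E1 n + E2 n + E3 n + E4 n + E5 n + E6 n + E7 n) :=
    N2_const_mul L hL _
  rw [hconst] at hD
  have h2 : L * N2 (fun n => E1 n + E2 n + E3 n + E4 n + E5 n + E6 n + E7 n)
      ≤ L * (12 * (l2norm x + l2norm z)) := mul_le_mul_of_nonneg_left hNE hL
  calc N2 (fun n => ‖OmegaF f (fun m => x m + z m) n - OmegaF f x n - OmegaF f z n‖)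
      ≤ L * N2 (fun n => E1 n + E2 n + E3 n + E4 n + E5 n + E6 n + E7 n) := hD
    _ ≤ L * (12 * (l2norm x + l2norm z)) := h2
    _ = 12 * L * (l2norm x + l2norm z) := by ring

lemma summable_of_memℓp (u : ℕ → ℂ) (h : Memℓp u 2) :
    Summable fun n => ‖u n‖ ^ 2 := by
  have h1 := (memℓp_two_iff_summable u).1 h
  convert h1 using 2 with n

lemma l2_triangle (u v : ℕ → ℂ)
    (su : Summable fun n => ‖u n‖ ^ 2)
    (sv : Summable fun n => ‖v n‖ ^ 2) :
    (Summable fun n => ‖u n + v n‖ ^ 2) ∧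
      l2norm (fun n => u n + v n) ≤ l2norm u + l2norm v := by
  obtain ⟨sab, hab⟩ := N2_add_le (fun n => ‖u n‖) (fun n => ‖v n‖) su sv
  obtain ⟨s0, h0⟩ := N2_mono (fun n => ‖u n + v n‖)
    (fun n => ‖u n‖ + ‖v n‖)
    (fun n => by
      rw [_root_.abs_of_nonneg (norm_nonneg _)]
      exact norm_add_le _ _) sab
  exact ⟨s0, le_trans h0 hab⟩

theorem stmt6 (L : ℝ) (hL : 0 ≤ L) (f : ℝ → ℂ)
    (hf : ∀ t s : ℝ, 0 ≤ t → 0 ≤ s → ‖f t - f s‖ ≤ L * |t - s|)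
    (hf0 : f 0 = 0) :
    ∃ Δ : ℝ, 1 ≤ Δ ∧
      ∀ x₁ y₁ x₂ y₂ : ℕ → ℂ,
        Memℓp x₁ 2 → Memℓp x₂ 2 →
        Memℓp (fun n => y₁ n - OmegaF f x₁ n) 2 →
        Memℓp (fun n => y₂ n - OmegaF f x₂ n) 2 →
        Qnorm f (fun n => x₁ n + x₂ n) (fun n => y₁ n + y₂ n) ≤
          Δ * (Qnorm f x₁ y₁ + Qnorm f x₂ y₂) := by
  refine ⟨1 + 12 * L, by linarith, ?_⟩
  intro x₁ y₁ x₂ y₂ hx1 hx2 hu1 hu2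
  have sx1 := summable_of_memℓp _ hx1
  have sx2 := summable_of_memℓp _ hx2
  have su1 := summable_of_memℓp _ hu1
  have su2 := summable_of_memℓp _ hu2
  obtain ⟨sD, hD⟩ := key L hL f hf x₁ x₂ sx1 sx2
  have ht1 := (l2_triangle x₁ x₂ sx1 sx2).2
  have sDneg : Summable fun n =>
      ‖-(OmegaF f (fun m => x₁ m + x₂ m) n - OmegaF f x₁ n - OmegaF f x₂ n)‖ ^ 2 := by
    have h : (fun n => ‖-(OmegaF f (fun m => x₁ m + x₂ m) n - OmegaF f x₁ n
        - OmegaF f x₂ n)‖ ^ 2) = fun n => ‖OmegaF f (fun m => x₁ m + x₂ m) n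
        - OmegaF f x₁ n - OmegaF f x₂ n‖ ^ 2 :=
      funext fun n => by rw [norm_neg]
    rw [h]; exact sD
  have hDneg : l2norm (fun n =>
      -(OmegaF f (fun m => x₁ m + x₂ m) n - OmegaF f x₁ n - OmegaF f x₂ n))
      = l2norm (fun n => OmegaF f (fun m => x₁ m + x₂ m) n - OmegaF f x₁ n - OmegaF f x₂ n) := by
    rw [l2norm, l2norm]
    congr 1
    exact tsum_congr fun n => by rw [norm_neg]
  obtain ⟨s23, h23⟩ := l2_triangle (fun n => y₂ n - OmegaF f x₂ n)
    (fun n => -(OmegaF f (fun m => x₁ m + x₂ m) n - OmegaF f x₁ n - OmegaF f x₂ n)) su2 sDneg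
  obtain ⟨s123, h123⟩ := l2_triangle (fun n => y₁ n - OmegaF f x₁ n)
    (fun n => (y₂ n - OmegaF f x₂ n)
      + -(OmegaF f (fun m => x₁ m + x₂ m) n - OmegaF f x₁ n - OmegaF f x₂ n)) su1 s23
  have hQ : Qnorm f (fun n => x₁ n + x₂ n) (fun n => y₁ n + y₂ n)
      = l2norm (fun n => x₁ n + x₂ n)
        + l2norm (fun n => (y₁ n - OmegaF f x₁ n)
          + ((y₂ n - OmegaF f x₂ n)
            + -(OmegaF f (fun m => x₁ m + x₂ m) n - OmegaF f x₁ n - OmegaF f x₂ n))) := by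
    rw [Qnorm]
    congr 1
    congr 1
    funext n
    ring_nf
  rw [hQ, Qnorm, Qnorm]
  have hmul : 12 * L * (l2norm x₁ + l2norm x₂)
      ≤ 12 * L * ((l2norm x₁ + l2norm (fun n => y₁ n - OmegaF f x₁ n))
        + (l2norm x₂ + l2norm (fun n => y₂ n - OmegaF f x₂ n))) := by
    apply mul_le_mul_of_nonneg_left _ (by positivity)
    have := l2norm_nonneg (fun n => y₁ n - OmegaF f x₁ n)
    have := l2norm_nonneg (fun n => y₂ n - OmegaF f x₂ n)
    linarith
  rw [hDneg] at h23
  nlinarith [ht1, h123, h23, hD, hmul, l2norm_nonneg (fun n => y₁ n - OmegaF f x₁ n),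
    l2norm_nonneg (fun n => y₂ n - OmegaF f x₂ n), l2norm_nonneg x₁, l2norm_nonneg x₂]
end

section
/- Let f : [0,∞) → ℂ be Lipschitz with f(0)=0 and let Ω_f be as above. Then Ω_f is quasi-additive: there is a constant C (depending only on the Lipschitz constant of f) such that ‖Ω_f(x₁ + x₂) − Ω_f(x₁) − Ω_f(x₂)‖₂ ≤ C(‖x₁‖₂ + ‖x₂‖₂) for all x₁, x₂ ∈ ℓ². -/
open Complex

lemma summable_sq {x : ℕ → ℂ} (hx : Memℓp x 2) :
    Summable (fun n => ‖x n‖ ^ 2) := by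
  have h0 : (0:ℝ) < (2:ENNReal).toReal := by norm_num
  have h := (memℓp_gen_iff h0).1 hx
  refine h.congr fun n => ?_
  rw [show ((2:ENNReal).toReal) = ((2:ℕ):ℝ) by norm_num, Real.rpow_natCast]

lemma l2norm_eq {x : ℕ → ℂ} (hx : Memℓp x 2) :
    l2norm x = ‖(⟨x, hx⟩ : lp (fun _ : ℕ => ℂ) 2)‖ := by
  rw [lp.norm_eq_tsum_rpow (by norm_num) ⟨x, hx⟩]
  unfold l2norm
  rw [Real.sqrt_eq_rpow]
  congr 1
  · exact tsum_congr fun n => by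
      rw [show ((2:ENNReal).toReal) = ((2:ℕ):ℝ) by norm_num, Real.rpow_natCast]

lemma l2norm_add_le {x y : ℕ → ℂ} (hx : Memℓp x 2) (hy : Memℓp y 2) :
    l2norm (fun n => x n + y n) ≤ l2norm x + l2norm y := by
  have hxy : Memℓp (fun n => x n + y n) 2 := hx.add hy
  rw [l2norm_eq hx, l2norm_eq hy, l2norm_eq hxy]
  have e : (⟨fun n => x n + y n, hxy⟩ : lp (fun _ : ℕ => ℂ) 2) = ⟨x, hx⟩ + ⟨y, hy⟩ := rfl
  rw [e]
  exact norm_add_le _ _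

lemma coord_le_s7 {x : ℕ → ℂ} (hx : Memℓp x 2) (n : ℕ) : ‖x n‖ ≤ l2norm x := by
  have hs := summable_sq hx
  have h1 : ‖x n‖ ^ 2 ≤ ∑' m, ‖x m‖ ^ 2 :=
    hs.le_tsum n fun m _ => by positivity
  have h2 := Real.sqrt_le_sqrt h1
  rwa [Real.sqrt_sq (norm_nonneg _)] at h2

lemma l2norm_sq {x : ℕ → ℂ} : l2norm x ^ 2 = ∑' n, ‖x n‖ ^ 2 := by
  exact Real.sq_sqrt (tsum_nonneg fun n => by positivity)

lemma l2norm_zero_iff {x : ℕ → ℂ} (hx : Memℓp x 2) (h : l2norm x = 0) (n : ℕ) : x n = 0 := by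
  have := coord_le_s7 hx n
  rw [h] at this
  exact norm_eq_zero.1 (le_antisymm this (norm_nonneg _))

lemma core_log {u v : ℝ} (hu : 0 < u) (hv : 0 < v) : u * Real.log (v / u) ≤ v := by
  have h := Real.log_le_sub_one_of_pos (div_pos hv hu)
  have h2 : u * (v / u) = v := by field_simp
  nlinarith

lemma core_log2 {u v : ℝ} (hu : 0 < u) (huv : u ≤ v) : u * |Real.log u - Real.log v| ≤ v := by
  have hv : 0 < v := lt_of_lt_of_le hu huv
  have h1 : Real.log u ≤ Real.log v := Real.log_le_log hu huv
  rw [abs_sub_comm, _root_.abs_of_nonneg (sub_nonneg.2 h1),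
    ← Real.log_div (ne_of_gt hv) (ne_of_gt hu)]
  exact core_log hu hv

lemma core_log3 {x X y Y : ℝ} (hx : 0 < x) (hX : 0 < X) (hy : 0 < y) (hY : 0 < Y)
    (h : x * Y ≤ y * X) : x * |Real.log (X / x) - Real.log (Y / y)| ≤ X * (y / Y) := by
  have hu : 0 < x / X := div_pos hx hX
  have hv : 0 < y / Y := div_pos hy hY
  have huv : x / X ≤ y / Y := (div_le_div_iff₀ hX hY).2 h
  have e : x * |Real.log (X / x) - Real.log (Y / y)|
      = X * ((x / X) * |Real.log (x / X) - Real.log (y / Y)|) := by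
    rw [Real.log_div hX.ne' hx.ne', Real.log_div hY.ne' hy.ne',
      Real.log_div hx.ne' hX.ne', Real.log_div hy.ne' hY.ne',
      show (Real.log X - Real.log x) - (Real.log Y - Real.log y)
          = -((Real.log x - Real.log X) - (Real.log y - Real.log Y)) by ring, abs_neg]
    field_simp
  rw [e]
  exact mul_le_mul_of_nonneg_left (core_log2 hu huv) hX.le

lemma zaux {w B G : ℝ} (hw : 0 ≤ w) (hB : 0 < B) (hG : 0 < G) (h : B ≤ G) :
    w * |Real.log G - Real.log B| ≤ G * (w / B) := by
  have h1 : B * Real.log (G / B) ≤ G := core_log hB hG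
  have e : |Real.log G - Real.log B| = Real.log (G / B) := by
    rw [Real.log_div hG.ne' hB.ne']
    exact _root_.abs_of_nonneg (sub_nonneg.2 (Real.log_le_log hB h))
  rw [e]
  calc w * Real.log (G / B) = (w / B) * (B * Real.log (G / B)) := by field_simp
    _ ≤ (w / B) * G := mul_le_mul_of_nonneg_left h1 (by positivity)
    _ = G * (w / B) := by ring

lemma zcase {w B G : ℝ} (hw : 0 ≤ w) (hB : 0 < B) (hG : 0 < G) :
    w * |Real.log G - Real.log B| ≤ G * (w / B) + B * (w / G) := by
  rcases le_total B G with h | h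
  · exact (zaux hw hB hG h).trans (le_add_of_nonneg_right (by positivity))
  · rw [abs_sub_comm]
    exact (zaux hw hG hB h).trans (le_add_of_nonneg_left (by positivity))

lemma lip_mul {L : ℝ} {f : ℝ → ℂ}
    (hf : ∀ t s : ℝ, 0 ≤ t → 0 ≤ s → ‖f t - f s‖ ≤ L * |t - s|)
    (z : ℂ) {t s : ℝ} (ht : 0 ≤ t) (hs : 0 ≤ s) :
    ‖z * (f t - f s)‖ ≤ ‖z‖ * (L * |t - s|) := by
  rw [norm_mul]
  exact mul_le_mul_of_nonneg_left (hf t s ht hs) (norm_nonneg z)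

set_option maxHeartbeats 2000000 in
lemma ptwise (L α β γ : ℝ) (f : ℝ → ℂ) (hL : 0 ≤ L)
    (hf : ∀ t s : ℝ, 0 ≤ t → 0 ≤ s → ‖f t - f s‖ ≤ L * |t - s|)
    (hα : 0 < α) (hβ : 0 < β) (hγ : 0 ≤ γ) (a b : ℂ)
    (ha : ‖a‖ ≤ α) (hb : ‖b‖ ≤ β) (hc : ‖a + b‖ ≤ γ) :
    ‖(if a + b = 0 then 0 else (a + b) * f (Real.log (γ / ‖a + b‖))) -
        (if a = 0 then 0 else a * f (Real.log (α / ‖a‖))) -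
        (if b = 0 then 0 else b * f (Real.log (β / ‖b‖)))‖ ≤
      L * (2 * (α + β + γ) * (‖a + b‖ / γ) +
        2 * (α + β + γ) * (‖a‖ / α) +
        2 * (α + β + γ) * (‖b‖ / β) +
        min (‖a‖) (‖b‖) * |Real.log (α / β)|) := by
  have hmin : (0:ℝ) ≤ min (‖a‖) (‖b‖) :=
    le_min (norm_nonneg a) (norm_nonneg b)
  have n1 : (0:ℝ) ≤ ‖a + b‖ / γ := div_nonneg (norm_nonneg _) hγ
  have n2 : (0:ℝ) ≤ ‖a‖ / α := div_nonneg (norm_nonneg _) hα.le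
  have n3 : (0:ℝ) ≤ ‖b‖ / β := div_nonneg (norm_nonneg _) hβ.le
  have n4 : (0:ℝ) ≤ min (‖a‖) (‖b‖) * |Real.log (α / β)| :=
    mul_nonneg hmin (abs_nonneg _)
  have hE : (0:ℝ) ≤ α + β + γ := by positivity
  have hT0 : (0:ℝ) ≤ 2 * (α + β + γ) * (‖a + b‖ / γ) +
      2 * (α + β + γ) * (‖a‖ / α) +
      2 * (α + β + γ) * (‖b‖ / β) +
      min (‖a‖) (‖b‖) * |Real.log (α / β)| := by
    nlinarith [mul_nonneg hE n1, mul_nonneg hE n2, mul_nonneg hE n3]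
  by_cases haz : a = 0
  · by_cases hbz : b = 0
    · have e : (if a + b = 0 then (0:ℂ) else (a + b) * f (Real.log (γ / ‖a + b‖))) -
          (if a = 0 then 0 else a * f (Real.log (α / ‖a‖))) -
          (if b = 0 then 0 else b * f (Real.log (β / ‖b‖))) = 0 := by
        rw [if_pos (show a + b = 0 by rw [haz, hbz, add_zero]), if_pos haz, if_pos hbz]; ring
      rw [e, norm_zero]
      exact mul_nonneg hL hT0
    · -- Z2 : a = 0, b ≠ 0
      have hab : a + b = b := by rw [haz, zero_add]
      rw [hab] at hc n1 ⊢
      have hcb : 0 < ‖b‖ := norm_pos_iff.mpr hbz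
      have hγp : 0 < γ := lt_of_lt_of_le hcb hc
      rw [if_neg hbz, if_pos haz, if_neg hbz]
      have hX : 0 ≤ Real.log (γ / ‖b‖) := Real.log_nonneg ((one_le_div hcb).2 hc)
      have hY : 0 ≤ Real.log (β / ‖b‖) := Real.log_nonneg ((one_le_div hcb).2 hb)
      have e : b * f (Real.log (γ / ‖b‖)) - 0 - b * f (Real.log (β / ‖b‖)) =
          b * (f (Real.log (γ / ‖b‖)) - f (Real.log (β / ‖b‖))) := by ring
      rw [e]
      have eXY : Real.log (γ / ‖b‖) - Real.log (β / ‖b‖) =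
          Real.log γ - Real.log β := by
        rw [Real.log_div hγp.ne' hcb.ne', Real.log_div hβ.ne' hcb.ne']; ring
      have key : ‖b‖ * |Real.log γ - Real.log β| ≤
          γ * (‖b‖ / β) + β * (‖b‖ / γ) :=
        zcase (norm_nonneg b) hβ hγp
      calc ‖b * (f (Real.log (γ / ‖b‖)) - f (Real.log (β / ‖b‖)))‖
          ≤ ‖b‖ * (L * |Real.log (γ / ‖b‖) - Real.log (β / ‖b‖)|) :=
            lip_mul hf b hX hY
        _ = L * (‖b‖ * |Real.log γ - Real.log β|) := by rw [eXY]; ring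
        _ ≤ L * (γ * (‖b‖ / β) + β * (‖b‖ / γ)) :=
            mul_le_mul_of_nonneg_left key hL
        _ ≤ L * (2 * (α + β + γ) * (‖b‖ / γ) +
            2 * (α + β + γ) * (‖a‖ / α) +
            2 * (α + β + γ) * (‖b‖ / β) +
            min (‖a‖) (‖b‖) * |Real.log (α / β)|) := by
          refine mul_le_mul_of_nonneg_left ?_ hL
          nlinarith [mul_nonneg hE n1, mul_nonneg hE n2, mul_nonneg hE n3,
            mul_nonneg (show (0:ℝ) ≤ α + β by linarith) n1,
            mul_nonneg (show (0:ℝ) ≤ α + β + 2*γ by linarith) n3]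
  · by_cases hbz : b = 0
    · -- Z3 : b = 0, a ≠ 0
      have hab : a + b = a := by rw [hbz, add_zero]
      rw [hab] at hc n1 ⊢
      have hca : 0 < ‖a‖ := norm_pos_iff.mpr haz
      have hγp : 0 < γ := lt_of_lt_of_le hca hc
      rw [if_neg haz, if_neg haz, if_pos hbz]
      have hX : 0 ≤ Real.log (γ / ‖a‖) := Real.log_nonneg ((one_le_div hca).2 hc)
      have hY : 0 ≤ Real.log (α / ‖a‖) := Real.log_nonneg ((one_le_div hca).2 ha)
      have e : a * f (Real.log (γ / ‖a‖)) - a * f (Real.log (α / ‖a‖)) - 0 =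
          a * (f (Real.log (γ / ‖a‖)) - f (Real.log (α / ‖a‖))) := by ring
      rw [e]
      have eXY : Real.log (γ / ‖a‖) - Real.log (α / ‖a‖) =
          Real.log γ - Real.log α := by
        rw [Real.log_div hγp.ne' hca.ne', Real.log_div hα.ne' hca.ne']; ring
      have key : ‖a‖ * |Real.log γ - Real.log α| ≤
          γ * (‖a‖ / α) + α * (‖a‖ / γ) :=
        zcase (norm_nonneg a) hα hγp
      calc ‖a * (f (Real.log (γ / ‖a‖)) - f (Real.log (α / ‖a‖)))‖
          ≤ ‖a‖ * (L * |Real.log (γ / ‖a‖) - Real.log (α / ‖a‖)|) :=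
            lip_mul hf a hX hY
        _ = L * (‖a‖ * |Real.log γ - Real.log α|) := by rw [eXY]; ring
        _ ≤ L * (γ * (‖a‖ / α) + α * (‖a‖ / γ)) :=
            mul_le_mul_of_nonneg_left key hL
        _ ≤ L * (2 * (α + β + γ) * (‖a‖ / γ) +
            2 * (α + β + γ) * (‖a‖ / α) +
            2 * (α + β + γ) * (‖b‖ / β) +
            min (‖a‖) (‖b‖) * |Real.log (α / β)|) := by
          refine mul_le_mul_of_nonneg_left ?_ hL
          nlinarith [mul_nonneg hE n1, mul_nonneg hE n2, mul_nonneg hE n3,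
            mul_nonneg (show (0:ℝ) ≤ α + β by linarith) n1,
            mul_nonneg (show (0:ℝ) ≤ α + 2*β + 2*γ by linarith) n2]
    · by_cases hcz : a + b = 0

      · -- Z4 : a + b = 0, a ≠ 0, b ≠ 0
        have hca : 0 < ‖a‖ := norm_pos_iff.mpr haz
        have hcb : 0 < ‖b‖ := norm_pos_iff.mpr hbz
        have hb' : b = -a := by linear_combination hcz
        have hcb_eq : ‖b‖ = ‖a‖ := by rw [hb']; exact norm_neg a
        rw [if_pos hcz, if_neg haz, if_neg hbz]
        have hX : 0 ≤ Real.log (β / ‖b‖) := Real.log_nonneg ((one_le_div hcb).2 hb)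
        have hY : 0 ≤ Real.log (α / ‖a‖) := Real.log_nonneg ((one_le_div hca).2 ha)
        have e : (0:ℂ) - a * f (Real.log (α / ‖a‖)) - b * f (Real.log (β / ‖b‖)) = a * (f (Real.log (β / ‖b‖)) - f (Real.log (α / ‖a‖))) := by
          linear_combination (-(f (Real.log (β / ‖b‖)))) * hcz
        rw [e]
        have eXY : Real.log (β / ‖b‖) - Real.log (α / ‖a‖) = Real.log β - Real.log α := by
          rw [Real.log_div hβ.ne' hcb.ne', Real.log_div hα.ne' hca.ne', hcb_eq]; ring
        have eM : ‖a‖ * |Real.log β - Real.log α| = (min (‖a‖) (‖b‖) * |Real.log (α / β)|) := by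
          rw [min_eq_left hcb_eq.ge, abs_sub_comm, ← Real.log_div hα.ne' hβ.ne']
        calc ‖a * (f (Real.log (β / ‖b‖)) - f (Real.log (α / ‖a‖)))‖ ≤ ‖a‖ * (L * |Real.log (β / ‖b‖) - Real.log (α / ‖a‖)|) := lip_mul hf a hX hY
          _ = L * (‖a‖ * |Real.log β - Real.log α|) := by rw [eXY]; ring
          _ = L * (min (‖a‖) (‖b‖) * |Real.log (α / β)|) := by rw [eM]
          _ ≤ L * (2 * (α + β + γ) * (‖a + b‖ / γ) + 2 * (α + β + γ) * (‖a‖ / α) + 2 * (α + β + γ) * (‖b‖ / β) + (min (‖a‖) (‖b‖) * |Real.log (α / β)|)) := by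
            refine mul_le_mul_of_nonneg_left ?_ hL
            nlinarith [mul_nonneg hE n1, mul_nonneg hE n2, mul_nonneg hE n3]
      · -- main case : a ≠ 0, b ≠ 0, a + b ≠ 0
        have hca : 0 < ‖a‖ := norm_pos_iff.mpr haz
        have hcb : 0 < ‖b‖ := norm_pos_iff.mpr hbz
        have hcc : 0 < ‖a + b‖ := norm_pos_iff.mpr hcz
        have hγp : 0 < γ := lt_of_lt_of_le hcc hc
        have hA : 0 ≤ Real.log (γ / ‖a + b‖) := Real.log_nonneg ((one_le_div hcc).2 hc)
        have hB : 0 ≤ Real.log (α / ‖a‖) := Real.log_nonneg ((one_le_div hca).2 ha)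
        have hC : 0 ≤ Real.log (β / ‖b‖) := Real.log_nonneg ((one_le_div hcb).2 hb)
        rw [if_neg hcz, if_neg haz, if_neg hbz]
        rcases le_or_gt (‖a‖ * γ) (‖a + b‖ * α) with hq | hq
        · rcases le_or_gt (‖b‖ * γ) (‖a + b‖ * β) with hp | hp
          · -- C1 : q ≤ w, p ≤ w : split0
            have p1 : ‖a‖ * |Real.log (γ / ‖a + b‖) - Real.log (α / ‖a‖)| ≤ α * (‖a + b‖ / γ) := by
              rw [abs_sub_comm]; exact core_log3 hca hα hcc hγp hq
            have p2 : ‖b‖ * |Real.log (γ / ‖a + b‖) - Real.log (β / ‖b‖)| ≤ β * (‖a + b‖ / γ) := by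
              rw [abs_sub_comm]; exact core_log3 hcb hβ hcc hγp hp
            have e : (a + b) * f (Real.log (γ / ‖a + b‖)) - a * f (Real.log (α / ‖a‖)) - b * f (Real.log (β / ‖b‖))
                = a * (f (Real.log (γ / ‖a + b‖)) - f (Real.log (α / ‖a‖))) + b * (f (Real.log (γ / ‖a + b‖)) - f (Real.log (β / ‖b‖))) := by ring
            rw [e]
            refine le_trans (norm_add_le _ _) ?_
            refine le_trans (add_le_add (lip_mul hf a hA hB) (lip_mul hf b hA hC)) ?_
            have inner : α * (‖a + b‖ / γ) + β * (‖a + b‖ / γ) ≤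
                2 * (α + β + γ) * (‖a + b‖ / γ) + 2 * (α + β + γ) * (‖a‖ / α) + 2 * (α + β + γ) * (‖b‖ / β) + (min (‖a‖) (‖b‖) * |Real.log (α / β)|) := by
              nlinarith [mul_nonneg (show (0:ℝ) ≤ α + β + 2*γ by linarith) n1,
                mul_nonneg hE n2, mul_nonneg hE n3]
            nlinarith [mul_le_mul_of_nonneg_left p1 hL, mul_le_mul_of_nonneg_left p2 hL,
              mul_le_mul_of_nonneg_left inner hL]
          · -- C2a : q ≤ w < p : split2
            have p1 : ‖a + b‖ * |Real.log (γ / ‖a + b‖) - Real.log (β / ‖b‖)| ≤ γ * (‖b‖ / β) := core_log3 hcc hγp hcb hβ hp.le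
            have p2 : ‖a‖ * |Real.log (γ / ‖a + b‖) - Real.log (α / ‖a‖)| ≤ α * (‖a + b‖ / γ) := by
              rw [abs_sub_comm]; exact core_log3 hca hα hcc hγp hq
            have hale : ‖a‖ ≤ (α / γ) * ‖a + b‖ := by
              rw [div_mul_eq_mul_div, le_div_iff₀ hγp]; linarith
            have p3 : ‖a‖ * |Real.log (β / ‖b‖) - Real.log (γ / ‖a + b‖)| ≤ α * (‖b‖ / β) := by
              calc ‖a‖ * |Real.log (β / ‖b‖) - Real.log (γ / ‖a + b‖)| ≤ ((α / γ) * ‖a + b‖) * |Real.log (β / ‖b‖) - Real.log (γ / ‖a + b‖)| :=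
                    mul_le_mul_of_nonneg_right hale (abs_nonneg _)
                _ = (α / γ) * (‖a + b‖ * |Real.log (γ / ‖a + b‖) - Real.log (β / ‖b‖)|) := by rw [abs_sub_comm]; ring
                _ ≤ (α / γ) * (γ * (‖b‖ / β)) := mul_le_mul_of_nonneg_left p1 (by positivity)
                _ = α * (‖b‖ / β) := by field_simp
            have p4 : ‖a‖ * |Real.log (β / ‖b‖) - Real.log (α / ‖a‖)| ≤ α * (‖b‖ / β) + α * (‖a + b‖ / γ) := by
              have h5 : ‖a‖ * |Real.log (β / ‖b‖) - Real.log (α / ‖a‖)| ≤ ‖a‖ * |Real.log (β / ‖b‖) - Real.log (γ / ‖a + b‖)| + ‖a‖ * |Real.log (γ / ‖a + b‖) - Real.log (α / ‖a‖)| := by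
                calc ‖a‖ * |Real.log (β / ‖b‖) - Real.log (α / ‖a‖)| ≤ ‖a‖ * (|Real.log (β / ‖b‖) - Real.log (γ / ‖a + b‖)| + |Real.log (γ / ‖a + b‖) - Real.log (α / ‖a‖)|) :=
                      mul_le_mul_of_nonneg_left (abs_sub_le (Real.log (β / ‖b‖)) (Real.log (γ / ‖a + b‖)) (Real.log (α / ‖a‖))) (norm_nonneg a)
                  _ = ‖a‖ * |Real.log (β / ‖b‖) - Real.log (γ / ‖a + b‖)| + ‖a‖ * |Real.log (γ / ‖a + b‖) - Real.log (α / ‖a‖)| := mul_add _ _ _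
              linarith
            have e : (a + b) * f (Real.log (γ / ‖a + b‖)) - a * f (Real.log (α / ‖a‖)) - b * f (Real.log (β / ‖b‖))
                = (a + b) * (f (Real.log (γ / ‖a + b‖)) - f (Real.log (β / ‖b‖))) + a * (f (Real.log (β / ‖b‖)) - f (Real.log (α / ‖a‖))) := by ring
            rw [e]
            refine le_trans (norm_add_le _ _) ?_
            refine le_trans (add_le_add (lip_mul hf (a + b) hA hC) (lip_mul hf a hC hB)) ?_
            have inner : γ * (‖b‖ / β) + (α * (‖b‖ / β) + α * (‖a + b‖ / γ)) ≤
                2 * (α + β + γ) * (‖a + b‖ / γ) + 2 * (α + β + γ) * (‖a‖ / α) + 2 * (α + β + γ) * (‖b‖ / β) + (min (‖a‖) (‖b‖) * |Real.log (α / β)|) := by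
              nlinarith [mul_nonneg (show (0:ℝ) ≤ α + 2*β + γ by linarith) n3,
                mul_nonneg (show (0:ℝ) ≤ α + 2*β + 2*γ by linarith) n1,
                mul_nonneg hE n2]
            nlinarith [mul_le_mul_of_nonneg_left p1 hL, mul_le_mul_of_nonneg_left p4 hL,
              mul_le_mul_of_nonneg_left inner hL]
        · rcases le_or_gt (‖b‖ * γ) (‖a + b‖ * β) with hp | hp
          · -- C3 : p ≤ w < q : split1
            have p1 : ‖a + b‖ * |Real.log (γ / ‖a + b‖) - Real.log (α / ‖a‖)| ≤ γ * (‖a‖ / α) := core_log3 hcc hγp hca hα hq.le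
            have p2 : ‖b‖ * |Real.log (γ / ‖a + b‖) - Real.log (β / ‖b‖)| ≤ β * (‖a + b‖ / γ) := by
              rw [abs_sub_comm]; exact core_log3 hcb hβ hcc hγp hp
            have hble : ‖b‖ ≤ (β / γ) * ‖a + b‖ := by
              rw [div_mul_eq_mul_div, le_div_iff₀ hγp]; linarith
            have p3 : ‖b‖ * |Real.log (α / ‖a‖) - Real.log (γ / ‖a + b‖)| ≤ β * (‖a‖ / α) := by
              calc ‖b‖ * |Real.log (α / ‖a‖) - Real.log (γ / ‖a + b‖)| ≤ ((β / γ) * ‖a + b‖) * |Real.log (α / ‖a‖) - Real.log (γ / ‖a + b‖)| :=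
                    mul_le_mul_of_nonneg_right hble (abs_nonneg _)
                _ = (β / γ) * (‖a + b‖ * |Real.log (γ / ‖a + b‖) - Real.log (α / ‖a‖)|) := by rw [abs_sub_comm]; ring
                _ ≤ (β / γ) * (γ * (‖a‖ / α)) := mul_le_mul_of_nonneg_left p1 (by positivity)
                _ = β * (‖a‖ / α) := by field_simp
            have p4 : ‖b‖ * |Real.log (α / ‖a‖) - Real.log (β / ‖b‖)| ≤ β * (‖a‖ / α) + β * (‖a + b‖ / γ) := by
              have h5 : ‖b‖ * |Real.log (α / ‖a‖) - Real.log (β / ‖b‖)| ≤ ‖b‖ * |Real.log (α / ‖a‖) - Real.log (γ / ‖a + b‖)| + ‖b‖ * |Real.log (γ / ‖a + b‖) - Real.log (β / ‖b‖)| := by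
                calc ‖b‖ * |Real.log (α / ‖a‖) - Real.log (β / ‖b‖)| ≤ ‖b‖ * (|Real.log (α / ‖a‖) - Real.log (γ / ‖a + b‖)| + |Real.log (γ / ‖a + b‖) - Real.log (β / ‖b‖)|) :=
                      mul_le_mul_of_nonneg_left (abs_sub_le (Real.log (α / ‖a‖)) (Real.log (γ / ‖a + b‖)) (Real.log (β / ‖b‖))) (norm_nonneg b)
                  _ = ‖b‖ * |Real.log (α / ‖a‖) - Real.log (γ / ‖a + b‖)| + ‖b‖ * |Real.log (γ / ‖a + b‖) - Real.log (β / ‖b‖)| := mul_add _ _ _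
              linarith
            have e : (a + b) * f (Real.log (γ / ‖a + b‖)) - a * f (Real.log (α / ‖a‖)) - b * f (Real.log (β / ‖b‖))
                = (a + b) * (f (Real.log (γ / ‖a + b‖)) - f (Real.log (α / ‖a‖))) + b * (f (Real.log (α / ‖a‖)) - f (Real.log (β / ‖b‖))) := by ring
            rw [e]
            refine le_trans (norm_add_le _ _) ?_
            refine le_trans (add_le_add (lip_mul hf (a + b) hA hB) (lip_mul hf b hB hC)) ?_
            have inner : γ * (‖a‖ / α) + (β * (‖a‖ / α) + β * (‖a + b‖ / γ)) ≤
                2 * (α + β + γ) * (‖a + b‖ / γ) + 2 * (α + β + γ) * (‖a‖ / α) + 2 * (α + β + γ) * (‖b‖ / β) + (min (‖a‖) (‖b‖) * |Real.log (α / β)|) := by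
              nlinarith [mul_nonneg (show (0:ℝ) ≤ 2*α + β + γ by linarith) n2,
                mul_nonneg (show (0:ℝ) ≤ 2*α + β + 2*γ by linarith) n1,
                mul_nonneg hE n3]
            nlinarith [mul_le_mul_of_nonneg_left p1 hL, mul_le_mul_of_nonneg_left p4 hL,
              mul_le_mul_of_nonneg_left inner hL]
          · -- C2b : w < q, w < p
            rcases le_total (‖a‖) (‖b‖) with hab | hab
            · -- ca ≤ cb : split2
              have p1 : ‖a + b‖ * |Real.log (γ / ‖a + b‖) - Real.log (β / ‖b‖)| ≤ γ * (‖b‖ / β) := core_log3 hcc hγp hcb hβ hp.le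
              have eCB : Real.log (β / ‖b‖) - Real.log (α / ‖a‖) = (Real.log (‖a‖) - Real.log (‖b‖)) + (Real.log β - Real.log α) := by
                rw [Real.log_div hβ.ne' hcb.ne', Real.log_div hα.ne' hca.ne']; ring
              have tri : |Real.log (β / ‖b‖) - Real.log (α / ‖a‖)| ≤ |Real.log (‖a‖) - Real.log (‖b‖)| + |Real.log β - Real.log α| := by
                rw [eCB]; exact abs_add_le _ _
              have p2 : ‖a‖ * |Real.log (‖a‖) - Real.log (‖b‖)| ≤ ‖b‖ := core_log2 hca hab
              have p3 : ‖a‖ * |Real.log β - Real.log α| = (min (‖a‖) (‖b‖) * |Real.log (α / β)|) := by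
                rw [min_eq_left hab, abs_sub_comm, ← Real.log_div hα.ne' hβ.ne']
              have p4 : ‖a‖ * |Real.log (β / ‖b‖) - Real.log (α / ‖a‖)| ≤ ‖b‖ + (min (‖a‖) (‖b‖) * |Real.log (α / β)|) := by
                have h5 : ‖a‖ * |Real.log (β / ‖b‖) - Real.log (α / ‖a‖)| ≤ ‖a‖ * |Real.log (‖a‖) - Real.log (‖b‖)| +
                    ‖a‖ * |Real.log β - Real.log α| := by
                  calc ‖a‖ * |Real.log (β / ‖b‖) - Real.log (α / ‖a‖)| ≤ ‖a‖ * (|Real.log (‖a‖) - Real.log (‖b‖)| +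
                        |Real.log β - Real.log α|) :=
                        mul_le_mul_of_nonneg_left tri (norm_nonneg a)
                    _ = _ := mul_add _ _ _
                linarith [p3.le]
              have hcbP : ‖b‖ = β * (‖b‖ / β) := by field_simp
              have e : (a + b) * f (Real.log (γ / ‖a + b‖)) - a * f (Real.log (α / ‖a‖)) - b * f (Real.log (β / ‖b‖))
                  = (a + b) * (f (Real.log (γ / ‖a + b‖)) - f (Real.log (β / ‖b‖))) + a * (f (Real.log (β / ‖b‖)) - f (Real.log (α / ‖a‖))) := by ring
              rw [e]
              refine le_trans (norm_add_le _ _) ?_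
              refine le_trans (add_le_add (lip_mul hf (a + b) hA hC) (lip_mul hf a hC hB)) ?_
              have inner : γ * (‖b‖ / β) + (‖b‖ + (min (‖a‖) (‖b‖) * |Real.log (α / β)|)) ≤
                  2 * (α + β + γ) * (‖a + b‖ / γ) + 2 * (α + β + γ) * (‖a‖ / α) + 2 * (α + β + γ) * (‖b‖ / β) + (min (‖a‖) (‖b‖) * |Real.log (α / β)|) := by
                nlinarith [hcbP, mul_nonneg (show (0:ℝ) ≤ 2*α + β + γ by linarith) n3,
                  mul_nonneg hE n1, mul_nonneg hE n2]
              nlinarith [mul_le_mul_of_nonneg_left p1 hL, mul_le_mul_of_nonneg_left p4 hL,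
                mul_le_mul_of_nonneg_left inner hL]
            · -- cb ≤ ca : split1
              have p1 : ‖a + b‖ * |Real.log (γ / ‖a + b‖) - Real.log (α / ‖a‖)| ≤ γ * (‖a‖ / α) := core_log3 hcc hγp hca hα hq.le
              have eBC : Real.log (α / ‖a‖) - Real.log (β / ‖b‖) = (Real.log (‖b‖) - Real.log (‖a‖)) + (Real.log α - Real.log β) := by
                rw [Real.log_div hα.ne' hca.ne', Real.log_div hβ.ne' hcb.ne']; ring
              have tri : |Real.log (α / ‖a‖) - Real.log (β / ‖b‖)| ≤ |Real.log (‖b‖) - Real.log (‖a‖)| + |Real.log α - Real.log β| := by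
                rw [eBC]; exact abs_add_le _ _
              have p2 : ‖b‖ * |Real.log (‖b‖) - Real.log (‖a‖)| ≤ ‖a‖ := core_log2 hcb hab
              have p3 : ‖b‖ * |Real.log α - Real.log β| = (min (‖a‖) (‖b‖) * |Real.log (α / β)|) := by
                rw [min_eq_right hab, ← Real.log_div hα.ne' hβ.ne']
              have p4 : ‖b‖ * |Real.log (α / ‖a‖) - Real.log (β / ‖b‖)| ≤ ‖a‖ + (min (‖a‖) (‖b‖) * |Real.log (α / β)|) := by
                have h5 : ‖b‖ * |Real.log (α / ‖a‖) - Real.log (β / ‖b‖)| ≤ ‖b‖ * |Real.log (‖b‖) - Real.log (‖a‖)| +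
                    ‖b‖ * |Real.log α - Real.log β| := by
                  calc ‖b‖ * |Real.log (α / ‖a‖) - Real.log (β / ‖b‖)| ≤ ‖b‖ * (|Real.log (‖b‖) - Real.log (‖a‖)| +
                        |Real.log α - Real.log β|) :=
                        mul_le_mul_of_nonneg_left tri (norm_nonneg b)
                    _ = _ := mul_add _ _ _
                linarith [p3.le]
              have hcaQ : ‖a‖ = α * (‖a‖ / α) := by field_simp
              have e : (a + b) * f (Real.log (γ / ‖a + b‖)) - a * f (Real.log (α / ‖a‖)) - b * f (Real.log (β / ‖b‖))
                  = (a + b) * (f (Real.log (γ / ‖a + b‖)) - f (Real.log (α / ‖a‖))) + b * (f (Real.log (α / ‖a‖)) - f (Real.log (β / ‖b‖))) := by ring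
              rw [e]
              refine le_trans (norm_add_le _ _) ?_
              refine le_trans (add_le_add (lip_mul hf (a + b) hA hB) (lip_mul hf b hB hC)) ?_
              have inner : γ * (‖a‖ / α) + (‖a‖ + (min (‖a‖) (‖b‖) * |Real.log (α / β)|)) ≤
                  2 * (α + β + γ) * (‖a + b‖ / γ) + 2 * (α + β + γ) * (‖a‖ / α) + 2 * (α + β + γ) * (‖b‖ / β) + (min (‖a‖) (‖b‖) * |Real.log (α / β)|) := by
                nlinarith [hcaQ, mul_nonneg (show (0:ℝ) ≤ α + 2*β + γ by linarith) n2,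
                  mul_nonneg hE n1, mul_nonneg hE n3]
              nlinarith [mul_le_mul_of_nonneg_left p1 hL, mul_le_mul_of_nonneg_left p4 hL,
                mul_le_mul_of_nonneg_left inner hL]

set_option maxHeartbeats 2000000 in
theorem stmt7 (L : ℝ) (hL : 0 ≤ L) :
    ∃ C : ℝ, ∀ f : ℝ → ℂ,
      (∀ t s : ℝ, 0 ≤ t → 0 ≤ s → ‖f t - f s‖ ≤ L * |t - s|) →
      f 0 = 0 →
      ∀ x₁ x₂ : ℕ → ℂ, Memℓp x₁ 2 → Memℓp x₂ 2 →
        l2norm (fun n =>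
            OmegaF f (fun m => x₁ m + x₂ m) n - OmegaF f x₁ n - OmegaF f x₂ n) ≤
          C * (l2norm x₁ + l2norm x₂) := by
  refine ⟨14 * L, ?_⟩
  intro f hf hf0 x₁ x₂ hx₁ hx₂
  have hA0' : 0 ≤ (l2norm x₁) := Real.sqrt_nonneg _
  have hB0' : 0 ≤ (l2norm x₂) := Real.sqrt_nonneg _
  by_cases hA0 : (l2norm x₁) = 0
  · have hz : ∀ n, x₁ n = 0 := l2norm_zero_iff hx₁ hA0
    have e : (fun n => (OmegaF f (fun m => x₁ m + x₂ m) n - OmegaF f x₁ n - OmegaF f x₂ n)) = fun _ => (0:ℂ) := by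
      funext n
      have exy : (fun m => x₁ m + x₂ m) = x₂ := by funext m; rw [hz m, zero_add]
      rw [exy, show OmegaF f x₁ n = 0 by simp [OmegaF, hz n]]
      ring
    rw [e, show l2norm (fun _ : ℕ => (0:ℂ)) = 0 by simp [l2norm]]
    nlinarith
  · by_cases hB0 : (l2norm x₂) = 0
    · have hz : ∀ n, x₂ n = 0 := l2norm_zero_iff hx₂ hB0
      have e : (fun n => (OmegaF f (fun m => x₁ m + x₂ m) n - OmegaF f x₁ n - OmegaF f x₂ n)) = fun _ => (0:ℂ) := by
        funext n
        have exy : (fun m => x₁ m + x₂ m) = x₁ := by funext m; rw [hz m, add_zero]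
        rw [exy, show OmegaF f x₂ n = 0 by simp [OmegaF, hz n]]
        ring
      rw [e, show l2norm (fun _ : ℕ => (0:ℂ)) = 0 by simp [l2norm]]
      nlinarith
    · have hA : 0 < (l2norm x₁) := hA0'.lt_of_ne (Ne.symm hA0)
      have hB : 0 < (l2norm x₂) := hB0'.lt_of_ne (Ne.symm hB0)
      have hc2 : Memℓp (fun m => x₁ m + x₂ m) 2 := hx₁.add hx₂
      have hG0 : 0 ≤ (l2norm (fun m => x₁ m + x₂ m)) := Real.sqrt_nonneg _
      have hGle : (l2norm (fun m => x₁ m + x₂ m)) ≤ (l2norm x₁) + (l2norm x₂) := l2norm_add_le hx₁ hx₂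
      have s1 : Summable (fun n => ‖x₁ n‖ ^ 2) := summable_sq hx₁
      have s2 : Summable (fun n => ‖x₂ n‖ ^ 2) := summable_sq hx₂
      have s3 : Summable (fun n => ‖x₁ n + x₂ n‖ ^ 2) := summable_sq hc2
      have key : ∀ n, ‖(OmegaF f (fun m => x₁ m + x₂ m) n - OmegaF f x₁ n - OmegaF f x₂ n)‖ ≤
          L * ((2 * ((l2norm x₁) + (l2norm x₂) + (l2norm (fun m => x₁ m + x₂ m))) * (‖x₁ n + x₂ n‖ / (l2norm (fun m => x₁ m + x₂ m)))) + (2 * ((l2norm x₁) + (l2norm x₂) + (l2norm (fun m => x₁ m + x₂ m))) * (‖x₁ n‖ / (l2norm x₁))) + (2 * ((l2norm x₁) + (l2norm x₂) + (l2norm (fun m => x₁ m + x₂ m))) * (‖x₂ n‖ / (l2norm x₂))) + (min (‖x₁ n‖) (‖x₂ n‖) * |Real.log ((l2norm x₁) / (l2norm x₂))|)) := by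
        intro n
        have h := ptwise L (l2norm x₁) (l2norm x₂) (l2norm (fun m => x₁ m + x₂ m)) f hL hf hA hB hG0 (x₁ n) (x₂ n)
          (coord_le_s7 hx₁ n) (coord_le_s7 hx₂ n) (coord_le_s7 hc2 n)
        simpa only [OmegaF] using h
      have key2 : ∀ n, ‖(OmegaF f (fun m => x₁ m + x₂ m) n - OmegaF f x₁ n - OmegaF f x₂ n)‖ ^ 2 ≤
          (16 * L ^ 2 * ((l2norm x₁) + (l2norm x₂) + (l2norm (fun m => x₁ m + x₂ m))) ^ 2 / (l2norm (fun m => x₁ m + x₂ m)) ^ 2) * ‖x₁ n + x₂ n‖ ^ 2 + (16 * L ^ 2 * ((l2norm x₁) + (l2norm x₂) + (l2norm (fun m => x₁ m + x₂ m))) ^ 2 / (l2norm x₁) ^ 2) * ‖x₁ n‖ ^ 2 +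
          (16 * L ^ 2 * ((l2norm x₁) + (l2norm x₂) + (l2norm (fun m => x₁ m + x₂ m))) ^ 2 / (l2norm x₂) ^ 2) * ‖x₂ n‖ ^ 2 + (4 * L ^ 2 * |Real.log ((l2norm x₁) / (l2norm x₂))| ^ 2) * min (‖x₁ n‖) (‖x₂ n‖) ^ 2 := by
        intro n
        have h := key n
        have d0 := norm_nonneg ((OmegaF f (fun m => x₁ m + x₂ m) n - OmegaF f x₁ n - OmegaF f x₂ n))
        have hS : ((2 * ((l2norm x₁) + (l2norm x₂) + (l2norm (fun m => x₁ m + x₂ m))) * (‖x₁ n + x₂ n‖ / (l2norm (fun m => x₁ m + x₂ m)))) + (2 * ((l2norm x₁) + (l2norm x₂) + (l2norm (fun m => x₁ m + x₂ m))) * (‖x₁ n‖ / (l2norm x₁))) + (2 * ((l2norm x₁) + (l2norm x₂) + (l2norm (fun m => x₁ m + x₂ m))) * (‖x₂ n‖ / (l2norm x₂))) + (min (‖x₁ n‖) (‖x₂ n‖) * |Real.log ((l2norm x₁) / (l2norm x₂))|)) ^ 2 ≤ 4 * ((2 * ((l2norm x₁) + (l2norm x₂) + (l2norm (fun m => x₁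 m + x₂ m))) * (‖x₁ n + x₂ n‖ / (l2norm (fun m => x₁ m + x₂ m)))) ^ 2 + (2 * ((l2norm x₁) + (l2norm x₂) + (l2norm (fun m => x₁ m + x₂ m))) * (‖x₁ n‖ / (l2norm x₁))) ^ 2 + (2 * ((l2norm x₁) + (l2norm x₂) + (l2norm (fun m => x₁ m + x₂ m))) * (‖x₂ n‖ / (l2norm x₂))) ^ 2 + (min (‖x₁ n‖) (‖x₂ n‖) * |Real.log ((l2norm x₁) / (l2norm x₂))|) ^ 2) := by
          nlinarith [sq_nonneg ((2 * ((l2norm x₁) + (l2norm x₂) + (l2norm (fun m => x₁ m + x₂ m))) * (‖x₁ n + x₂ n‖ / (l2norm (fun m => x₁ m + x₂ m)))) - (2 * ((l2norm x₁) + (l2norm x₂) + (l2norm (fun m => x₁ m + x₂ m))) * (‖x₁ n‖ / (l2norm x₁)))), sq_nonneg ((2 * ((l2norm x₁) + (l2norm x₂) + (l2norm (fun m => x₁ m + x₂ m))) * (‖x₁ n + x₂ n‖ / (l2norm (fun m => x₁ m + x₂ m)))) - (2 * ((l2norm x₁) + (l2norm x₂) + (l2norm (fun m => x₁ m + x₂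 m))) * (‖x₂ n‖ / (l2norm x₂)))), sq_nonneg ((2 * ((l2norm x₁) + (l2norm x₂) + (l2norm (fun m => x₁ m + x₂ m))) * (‖x₁ n + x₂ n‖ / (l2norm (fun m => x₁ m + x₂ m)))) - (min (‖x₁ n‖) (‖x₂ n‖) * |Real.log ((l2norm x₁) / (l2norm x₂))|)),
            sq_nonneg ((2 * ((l2norm x₁) + (l2norm x₂) + (l2norm (fun m => x₁ m + x₂ m))) * (‖x₁ n‖ / (l2norm x₁))) - (2 * ((l2norm x₁) + (l2norm x₂) + (l2norm (fun m => x₁ m + x₂ m))) * (‖x₂ n‖ / (l2norm x₂)))), sq_nonneg ((2 * ((l2norm x₁) + (l2norm x₂) + (l2norm (fun m => x₁ m + x₂ m))) * (‖x₁ n‖ / (l2norm x₁))) - (min (‖x₁ n‖) (‖x₂ n‖) * |Real.log ((l2norm x₁) / (l2norm x₂))|)), sq_nonneg ((2 * ((l2norm x₁) + (l2norm x₂) + (l2norm (fun m => x₁ m + x₂ m))) * (‖x₂ n‖ / (l2norm x₂))) - (min (‖x₁ n‖) (‖x₂ n‖) * |Real.log ((l2norm x₁) / (l2norm x₂))|)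)]
        have h2 : ‖(OmegaF f (fun m => x₁ m + x₂ m) n - OmegaF f x₁ n - OmegaF f x₂ n)‖ ^ 2 ≤ L ^ 2 * (((2 * ((l2norm x₁) + (l2norm x₂) + (l2norm (fun m => x₁ m + x₂ m))) * (‖x₁ n + x₂ n‖ / (l2norm (fun m => x₁ m + x₂ m)))) + (2 * ((l2norm x₁) + (l2norm x₂) + (l2norm (fun m => x₁ m + x₂ m))) * (‖x₁ n‖ / (l2norm x₁))) + (2 * ((l2norm x₁) + (l2norm x₂) + (l2norm (fun m => x₁ m + x₂ m))) * (‖x₂ n‖ / (l2norm x₂))) + (min (‖x₁ n‖) (‖x₂ n‖) * |Real.log ((l2norm x₁) / (l2norm x₂))|)) ^ 2) := by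
          nlinarith [mul_self_le_mul_self d0 h]
        have h3 : L ^ 2 * (((2 * ((l2norm x₁) + (l2norm x₂) + (l2norm (fun m => x₁ m + x₂ m))) * (‖x₁ n + x₂ n‖ / (l2norm (fun m => x₁ m + x₂ m)))) + (2 * ((l2norm x₁) + (l2norm x₂) + (l2norm (fun m => x₁ m + x₂ m))) * (‖x₁ n‖ / (l2norm x₁))) + (2 * ((l2norm x₁) + (l2norm x₂) + (l2norm (fun m => x₁ m + x₂ m))) * (‖x₂ n‖ / (l2norm x₂))) + (min (‖x₁ n‖) (‖x₂ n‖) * |Real.log ((l2norm x₁) / (l2norm x₂))|)) ^ 2) ≤ L ^ 2 * (4 * ((2 * ((l2norm x₁) + (l2norm x₂) + (l2norm (fun m => x₁ m + x₂ m))) * (‖x₁ n + x₂ n‖ / (l2norm (fun m => x₁ m + x₂ m)))) ^ 2 + (2 * ((l2norm x₁) + (l2norm x₂) + (l2norm (fun m => x₁ m + x₂ m))) * (‖x₁ n‖ / (l2norm x₁))) ^ 2 + (2 * ((l2norm x₁) + (l2norm x₂) + (l2norm (fun m => x₁ m + x₂ m))) * (‖x₂ n‖ / (l2norm x₂))) ^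 2 + (min (‖x₁ n‖) (‖x₂ n‖) * |Real.log ((l2norm x₁) / (l2norm x₂))|) ^ 2)) :=
          mul_le_mul_of_nonneg_left hS (sq_nonneg L)
        have h4 : L ^ 2 * (4 * ((2 * ((l2norm x₁) + (l2norm x₂) + (l2norm (fun m => x₁ m + x₂ m))) * (‖x₁ n + x₂ n‖ / (l2norm (fun m => x₁ m + x₂ m)))) ^ 2 + (2 * ((l2norm x₁) + (l2norm x₂) + (l2norm (fun m => x₁ m + x₂ m))) * (‖x₁ n‖ / (l2norm x₁))) ^ 2 + (2 * ((l2norm x₁) + (l2norm x₂) + (l2norm (fun m => x₁ m + x₂ m))) * (‖x₂ n‖ / (l2norm x₂))) ^ 2 + (min (‖x₁ n‖) (‖x₂ n‖) * |Real.log ((l2norm x₁) / (l2norm x₂))|) ^ 2)) =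
            (16 * L ^ 2 * ((l2norm x₁) + (l2norm x₂) + (l2norm (fun m => x₁ m + x₂ m))) ^ 2 / (l2norm (fun m => x₁ m + x₂ m)) ^ 2) * ‖x₁ n + x₂ n‖ ^ 2 + (16 * L ^ 2 * ((l2norm x₁) + (l2norm x₂) + (l2norm (fun m => x₁ m + x₂ m))) ^ 2 / (l2norm x₁) ^ 2) * ‖x₁ n‖ ^ 2 +
            (16 * L ^ 2 * ((l2norm x₁) + (l2norm x₂) + (l2norm (fun m => x₁ m + x₂ m))) ^ 2 / (l2norm x₂) ^ 2) * ‖x₂ n‖ ^ 2 + (4 * L ^ 2 * |Real.log ((l2norm x₁) / (l2norm x₂))| ^ 2) * min (‖x₁ n‖) (‖x₂ n‖) ^ 2 := by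
          ring
        linarith [h2, h3, h4.le]
      have smin : Summable (fun n => min (‖x₁ n‖) (‖x₂ n‖) ^ 2) := by
        refine Summable.of_nonneg_of_le (fun n => by positivity) (fun n => ?_) s1
        have hm1 : (0:ℝ) ≤ min (‖x₁ n‖) (‖x₂ n‖) :=
          le_min (norm_nonneg _) (norm_nonneg _)
        have hm2 : min (‖x₁ n‖) (‖x₂ n‖) ≤ ‖x₁ n‖ :=
          min_le_left _ _
        nlinarith
      have sRHS : Summable (fun n => (16 * L ^ 2 * ((l2norm x₁) + (l2norm x₂) + (l2norm (fun m => x₁ m + x₂ m))) ^ 2 / (l2norm (fun m => x₁ m + x₂ m)) ^ 2) * ‖x₁ n + x₂ n‖ ^ 2 + (16 * L ^ 2 * ((l2norm x₁) + (l2norm x₂) + (l2norm (fun m => x₁ m + x₂ m))) ^ 2 / (l2norm x₁) ^ 2) * ‖x₁ n‖ ^ 2 +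
          (16 * L ^ 2 * ((l2norm x₁) + (l2norm x₂) + (l2norm (fun m => x₁ m + x₂ m))) ^ 2 / (l2norm x₂) ^ 2) * ‖x₂ n‖ ^ 2 + (4 * L ^ 2 * |Real.log ((l2norm x₁) / (l2norm x₂))| ^ 2) * min (‖x₁ n‖) (‖x₂ n‖) ^ 2) :=
        (((s3.mul_left _).add (s1.mul_left _)).add (s2.mul_left _)).add (smin.mul_left _)
      have sLHS : Summable (fun n => ‖(OmegaF f (fun m => x₁ m + x₂ m) n - OmegaF f x₁ n - OmegaF f x₂ n)‖ ^ 2) :=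
        Summable.of_nonneg_of_le (fun n => by positivity) key2 sRHS
      have htsum : (∑' n, ‖(OmegaF f (fun m => x₁ m + x₂ m) n - OmegaF f x₁ n - OmegaF f x₂ n)‖ ^ 2) ≤
          ∑' n, ((16 * L ^ 2 * ((l2norm x₁) + (l2norm x₂) + (l2norm (fun m => x₁ m + x₂ m))) ^ 2 / (l2norm (fun m => x₁ m + x₂ m)) ^ 2) * ‖x₁ n + x₂ n‖ ^ 2 + (16 * L ^ 2 * ((l2norm x₁) + (l2norm x₂) + (l2norm (fun m => x₁ m + x₂ m))) ^ 2 / (l2norm x₁) ^ 2) * ‖x₁ n‖ ^ 2 +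
            (16 * L ^ 2 * ((l2norm x₁) + (l2norm x₂) + (l2norm (fun m => x₁ m + x₂ m))) ^ 2 / (l2norm x₂) ^ 2) * ‖x₂ n‖ ^ 2 + (4 * L ^ 2 * |Real.log ((l2norm x₁) / (l2norm x₂))| ^ 2) * min (‖x₁ n‖) (‖x₂ n‖) ^ 2) :=
        Summable.tsum_le_tsum key2 sLHS sRHS
      have e1 : (∑' n, ((16 * L ^ 2 * ((l2norm x₁) + (l2norm x₂) + (l2norm (fun m => x₁ m + x₂ m))) ^ 2 / (l2norm (fun m => x₁ m + x₂ m)) ^ 2) * ‖x₁ n + x₂ n‖ ^ 2 + (16 * L ^ 2 * ((l2norm x₁) + (l2norm x₂) + (l2norm (fun m => x₁ m + x₂ m))) ^ 2 / (l2norm x₁) ^ 2) * ‖x₁ n‖ ^ 2 +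
            (16 * L ^ 2 * ((l2norm x₁) + (l2norm x₂) + (l2norm (fun m => x₁ m + x₂ m))) ^ 2 / (l2norm x₂) ^ 2) * ‖x₂ n‖ ^ 2 + (4 * L ^ 2 * |Real.log ((l2norm x₁) / (l2norm x₂))| ^ 2) * min (‖x₁ n‖) (‖x₂ n‖) ^ 2)) =
          (16 * L ^ 2 * ((l2norm x₁) + (l2norm x₂) + (l2norm (fun m => x₁ m + x₂ m))) ^ 2 / (l2norm (fun m => x₁ m + x₂ m)) ^ 2) * (∑' n, ‖x₁ n + x₂ n‖ ^ 2) + (16 * L ^ 2 * ((l2norm x₁) + (l2norm x₂) + (l2norm (fun m => x₁ m + x₂ m))) ^ 2 / (l2norm x₁) ^ 2) * (∑' n, ‖x₁ n‖ ^ 2) +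
          (16 * L ^ 2 * ((l2norm x₁) + (l2norm x₂) + (l2norm (fun m => x₁ m + x₂ m))) ^ 2 / (l2norm x₂) ^ 2) * (∑' n, ‖x₂ n‖ ^ 2) +
          (4 * L ^ 2 * |Real.log ((l2norm x₁) / (l2norm x₂))| ^ 2) * (∑' n, min (‖x₁ n‖) (‖x₂ n‖) ^ 2) := by
        rw [Summable.tsum_add (((s3.mul_left _).add (s1.mul_left _)).add (s2.mul_left _)) (smin.mul_left _),
          Summable.tsum_add ((s3.mul_left _).add (s1.mul_left _)) (s2.mul_left _),
          Summable.tsum_add (s3.mul_left _) (s1.mul_left _),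
          tsum_mul_left, tsum_mul_left, tsum_mul_left, tsum_mul_left]
      have eG : (∑' n, ‖x₁ n + x₂ n‖ ^ 2) = (l2norm (fun m => x₁ m + x₂ m)) ^ 2 := l2norm_sq.symm
      have eA : (∑' n, ‖x₁ n‖ ^ 2) = (l2norm x₁) ^ 2 := l2norm_sq.symm
      have eB : (∑' n, ‖x₂ n‖ ^ 2) = (l2norm x₂) ^ 2 := l2norm_sq.symm
      have bG : (16 * L ^ 2 * ((l2norm x₁) + (l2norm x₂) + (l2norm (fun m => x₁ m + x₂ m))) ^ 2 / (l2norm (fun m => x₁ m + x₂ m)) ^ 2) * (l2norm (fun m => x₁ m + x₂ m)) ^ 2 ≤ 16 * L ^ 2 * ((l2norm x₁) + (l2norm x₂) + (l2norm (fun m => x₁ m + x₂ m))) ^ 2 := by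
        rcases eq_or_lt_of_le hG0 with h | h
        · rw [← h]
          norm_num
          positivity
        · rw [div_mul_cancel₀ _ (by positivity : (l2norm (fun m => x₁ m + x₂ m)) ^ 2 ≠ 0)]
      have bA : (16 * L ^ 2 * ((l2norm x₁) + (l2norm x₂) + (l2norm (fun m => x₁ m + x₂ m))) ^ 2 / (l2norm x₁) ^ 2) * (l2norm x₁) ^ 2 = 16 * L ^ 2 * ((l2norm x₁) + (l2norm x₂) + (l2norm (fun m => x₁ m + x₂ m))) ^ 2 := by
        rw [div_mul_cancel₀ _ (by positivity : (l2norm x₁) ^ 2 ≠ 0)]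
      have bB : (16 * L ^ 2 * ((l2norm x₁) + (l2norm x₂) + (l2norm (fun m => x₁ m + x₂ m))) ^ 2 / (l2norm x₂) ^ 2) * (l2norm x₂) ^ 2 = 16 * L ^ 2 * ((l2norm x₁) + (l2norm x₂) + (l2norm (fun m => x₁ m + x₂ m))) ^ 2 := by
        rw [div_mul_cancel₀ _ (by positivity : (l2norm x₂) ^ 2 ≠ 0)]
      have bmin : (∑' n, min (‖x₁ n‖) (‖x₂ n‖) ^ 2) ≤ min (l2norm x₁) (l2norm x₂) ^ 2 := by
        rcases le_total (l2norm x₁) (l2norm x₂) with h | h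
        · rw [min_eq_left h, ← eA]
          refine Summable.tsum_le_tsum (fun n => ?_) smin s1
          have hm1 : (0:ℝ) ≤ min (‖x₁ n‖) (‖x₂ n‖) :=
            le_min (norm_nonneg _) (norm_nonneg _)
          have hm2 : min (‖x₁ n‖) (‖x₂ n‖) ≤ ‖x₁ n‖ :=
            min_le_left _ _
          nlinarith
        · rw [min_eq_right h, ← eB]
          refine Summable.tsum_le_tsum (fun n => ?_) smin s2
          have hm1 : (0:ℝ) ≤ min (‖x₁ n‖) (‖x₂ n‖) :=
            le_min (norm_nonneg _) (norm_nonneg _)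
          have hm2 : min (‖x₁ n‖) (‖x₂ n‖) ≤ ‖x₂ n‖ :=
            min_le_right _ _
          nlinarith
      have blog : min (l2norm x₁) (l2norm x₂) * |Real.log ((l2norm x₁) / (l2norm x₂))| ≤ (l2norm x₁) + (l2norm x₂) := by
        rcases le_total (l2norm x₁) (l2norm x₂) with h | h
        · rw [min_eq_left h, Real.log_div hA.ne' hB.ne']
          have := core_log2 hA h
          linarith
        · rw [min_eq_right h, Real.log_div hA.ne' hB.ne', abs_sub_comm]
          have := core_log2 hB h
          linarith
      have bK4 : (4 * L ^ 2 * |Real.log ((l2norm x₁) / (l2norm x₂))| ^ 2) * (∑' n, min (‖x₁ n‖) (‖x₂ n‖) ^ 2) ≤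
          4 * L ^ 2 * ((l2norm x₁) + (l2norm x₂)) ^ 2 := by
        have h1 : (4 * L ^ 2 * |Real.log ((l2norm x₁) / (l2norm x₂))| ^ 2) * (∑' n, min (‖x₁ n‖) (‖x₂ n‖) ^ 2) ≤
            (4 * L ^ 2 * |Real.log ((l2norm x₁) / (l2norm x₂))| ^ 2) * (min (l2norm x₁) (l2norm x₂) ^ 2) := mul_le_mul_of_nonneg_left bmin (by positivity)
        have h2 : (0:ℝ) ≤ min (l2norm x₁) (l2norm x₂) := le_min hA.le hB.le
        have h3 : (min (l2norm x₁) (l2norm x₂) * |Real.log ((l2norm x₁) / (l2norm x₂))|) ^ 2 ≤ ((l2norm x₁) + (l2norm x₂)) ^ 2 := by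
          nlinarith [blog, mul_nonneg h2 (abs_nonneg (Real.log ((l2norm x₁) / (l2norm x₂))))]
        nlinarith [h1, mul_le_mul_of_nonneg_left h3 (by positivity : (0:ℝ) ≤ 4 * L ^ 2)]
      have hE2 : ((l2norm x₁) + (l2norm x₂) + (l2norm (fun m => x₁ m + x₂ m))) ^ 2 ≤ 4 * ((l2norm x₁) + (l2norm x₂)) ^ 2 := by nlinarith
      have final : (∑' n, ‖(OmegaF f (fun m => x₁ m + x₂ m) n - OmegaF f x₁ n - OmegaF f x₂ n)‖ ^ 2) ≤ 196 * L ^ 2 * ((l2norm x₁) + (l2norm x₂)) ^ 2 := by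
        have hc3 : 16 * L ^ 2 * ((l2norm x₁) + (l2norm x₂) + (l2norm (fun m => x₁ m + x₂ m))) ^ 2 ≤ 64 * L ^ 2 * ((l2norm x₁) + (l2norm x₂)) ^ 2 := by
          nlinarith [mul_le_mul_of_nonneg_left hE2 (sq_nonneg L)]
        calc (∑' n, ‖(OmegaF f (fun m => x₁ m + x₂ m) n - OmegaF f x₁ n - OmegaF f x₂ n)‖ ^ 2) ≤ _ := htsum
          _ = (16 * L ^ 2 * ((l2norm x₁) + (l2norm x₂) + (l2norm (fun m => x₁ m + x₂ m))) ^ 2 / (l2norm (fun m => x₁ m + x₂ m)) ^ 2) * (l2norm (fun m => x₁ m + x₂ m)) ^ 2 + (16 * L ^ 2 * ((l2norm x₁) + (l2norm x₂) + (l2norm (fun m => x₁ m + x₂ m))) ^ 2 / (l2norm x₁) ^ 2) * (l2norm x₁) ^ 2 + (16 * L ^ 2 * ((l2norm x₁) + (l2norm x₂) + (l2norm (fun m => x₁ m + x₂ m))) ^ 2 / (l2norm x₂) ^ 2) * (l2norm x₂) ^ 2 +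
              (4 * L ^ 2 * |Real.log ((l2norm x₁) / (l2norm x₂))| ^ 2) * (∑' n, min (‖x₁ n‖) (‖x₂ n‖) ^ 2) := by
            rw [e1, eG, eA, eB]
          _ ≤ 196 * L ^ 2 * ((l2norm x₁) + (l2norm x₂)) ^ 2 := by
            rw [bA, bB]
            linarith [bG, bK4, hc3]
      have step : Real.sqrt (∑' n, ‖(OmegaF f (fun m => x₁ m + x₂ m) n - OmegaF f x₁ n - OmegaF f x₂ n)‖ ^ 2) ≤
          Real.sqrt (196 * L ^ 2 * ((l2norm x₁) + (l2norm x₂)) ^ 2) := Real.sqrt_le_sqrt final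
      have e2 : Real.sqrt (196 * L ^ 2 * ((l2norm x₁) + (l2norm x₂)) ^ 2) = 14 * L * ((l2norm x₁) + (l2norm x₂)) := by
        rw [show 196 * L ^ 2 * ((l2norm x₁) + (l2norm x₂)) ^ 2 = (14 * L * ((l2norm x₁) + (l2norm x₂))) ^ 2 by ring,
          Real.sqrt_sq (by positivity)]
      calc l2norm (fun n => (OmegaF f (fun m => x₁ m + x₂ m) n - OmegaF f x₁ n - OmegaF f x₂ n)) = Real.sqrt (∑' n, ‖(OmegaF f (fun m => x₁ m + x₂ m) n - OmegaF f x₁ n - OmegaF f x₂ n)‖ ^ 2) := rfl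
        _ ≤ Real.sqrt (196 * L ^ 2 * ((l2norm x₁) + (l2norm x₂)) ^ 2) := step
        _ = 14 * L * ((l2norm x₁) + (l2norm x₂)) := e2
end

section
/- Fix β ∈ ℝ and let b = 1 + iβ. For w ∈ ℓ² with ‖w‖₂ ≤ 1 and all |w(n)| ≤ 1, define Ω_β(w)(n) = w(n)(log(‖w‖₂/|w(n)|))^b and Ω'_β(w)(n) = w(n)(log(1/|w(n)|))^b (both with the convention 0 at indices where w(n) = 0). Then ‖Ω_β(w) − Ω'_β(w)‖₂ ≤ |b| · |log ‖w‖₂| · ‖w‖₂ ≤ |b|. -/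
open Complex

/-- `Ω_β(w)(n) = w(n) (log(‖w‖₂/|w(n)|))^{1+iβ}`, with the `0` convention. -/
noncomputable def OmegaB (β : ℝ) (w : ℕ → ℂ) : ℕ → ℂ :=
  fun n => if w n = 0 then 0 else
    w n * ((Real.log (l2norm w / ‖w n‖) : ℂ) ^ ((1 : ℂ) + β * I))

/-- `Ω'_β(w)(n) = w(n) (log(1/|w(n)|))^{1+iβ}`, with the `0` convention. -/
noncomputable def OmegaB' (β : ℝ) (w : ℕ → ℂ) : ℕ → ℂ :=
  fun n => if w n = 0 then 0 else
    w n * ((Real.log (1 / ‖w n‖) : ℂ) ^ ((1 : ℂ) + β * I))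


lemma deriv_cpow_real {b : ℂ} {x : ℝ} (hx : 0 < x) :
    HasDerivAt (fun y : ℝ => (y : ℂ) ^ b) (b * (x : ℂ) ^ (b - 1)) x := by
  have h : HasDerivAt (fun z : ℂ => z ^ b) (b * (x : ℂ) ^ (b - 1) * 1) (x : ℂ) := by
    exact (hasDerivAt_id (x : ℂ)).cpow_const (by simp [hx])
  rw [mul_one] at h
  exact h.comp_ofReal

lemma key_s8 (β : ℝ) {s t : ℝ} (hs : 0 ≤ s) (hst : s ≤ t) :
    ‖(t:ℂ)^((1:ℂ)+β*I) - (s:ℂ)^((1:ℂ)+β*I)‖ ≤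
      ‖(1:ℂ)+β*I‖ * (t - s) := by
  set b : ℂ := (1:ℂ) + β*I with hb
  have hbre : b.re = 1 := by simp [hb]
  have hb1 : (1:ℝ) ≤ ‖b‖ := by
    calc (1:ℝ) = |b.re| := by rw [hbre]; norm_num
    _ ≤ ‖b‖ := Complex.abs_re_le_norm b
  have hbne : b ≠ 0 := by
    intro h; have := congrArg Complex.re h; simp [hbre] at this
  rcases eq_or_lt_of_le hs with rfl | hs'
  · -- s = 0
    rw [Complex.ofReal_zero, Complex.zero_cpow hbne, sub_zero]
    rcases eq_or_lt_of_le hst with rfl | ht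
    · simp [Complex.zero_cpow hbne]
    · rw [Complex.norm_cpow_eq_rpow_re_of_pos ht, hbre, Real.rpow_one, sub_zero]
      nlinarith [norm_nonneg b]
  · -- 0 < s
    have : ∀ x ∈ Set.Icc s t, HasDerivWithinAt (fun y : ℝ => (y : ℂ) ^ b)
        (b * (x : ℂ) ^ (b - 1)) (Set.Icc s t) x := fun x hx =>
      (deriv_cpow_real (lt_of_lt_of_le hs' hx.1)).hasDerivWithinAt
    have hbound : ∀ x ∈ Set.Icc s t, ‖b * (x : ℂ) ^ (b - 1)‖ ≤ ‖b‖ := by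
      intro x hx
      have hx0 : (0:ℝ) < x := lt_of_lt_of_le hs' hx.1
      rw [norm_mul]
      have : ‖(x : ℂ) ^ (b - 1)‖ = 1 := by
        rw [Complex.norm_cpow_eq_rpow_re_of_pos hx0]
        simp [hbre]
      rw [this, mul_one]
    have h2 := (convex_Icc s t).norm_image_sub_le_of_norm_hasDerivWithin_le this hbound
      (Set.left_mem_Icc.2 hst) (Set.right_mem_Icc.2 hst)
    calc ‖(t:ℂ)^b - (s:ℂ)^b‖ ≤ ‖b‖ * ‖t - s‖ := h2
      _ = ‖b‖ * (t - s) := by rw [Real.norm_eq_abs, _root_.abs_of_nonneg (by linarith : (0:ℝ) ≤ t - s)]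

theorem stmt8 (β : ℝ) (w : ℕ → ℂ) (hw : Memℓp w 2)
    (hw2 : l2norm w ≤ 1) (hwinf : ∀ n, ‖w n‖ ≤ 1) :
    l2norm (fun n => OmegaB β w n - OmegaB' β w n) ≤
        ‖(1 : ℂ) + β * I‖ * |Real.log (l2norm w)| * l2norm w ∧
      ‖(1 : ℂ) + β * I‖ * |Real.log (l2norm w)| * l2norm w ≤
        ‖(1 : ℂ) + β * I‖ := by
  set b : ℂ := (1 : ℂ) + β * I with hb
  set N : ℝ := l2norm w with hN
  have hsum : Summable fun n => ‖w n‖ ^ 2 := by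
    have := (memℓp_gen_iff (p := 2) (by norm_num)).1 hw
    simpa [Real.rpow_natCast, ENNReal.toReal_ofNat,
      Real.rpow_two] using this
  have hNnn : 0 ≤ N := Real.sqrt_nonneg _
  have hle : ∀ n, ‖w n‖ ≤ N := by
    intro n
    have h1 : ‖w n‖ ^ 2 ≤ ∑' m, ‖w m‖ ^ 2 :=
      Summable.le_tsum hsum n fun m _ => sq_nonneg _
    calc ‖w n‖ = Real.sqrt (‖w n‖ ^ 2) := by
          rw [Real.sqrt_sq (norm_nonneg _)]
      _ ≤ N := Real.sqrt_le_sqrt h1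
  set C : ℝ := ‖b‖ * |Real.log N| with hC
  have hCnn : 0 ≤ C := mul_nonneg (norm_nonneg _) (abs_nonneg _)
  -- pointwise bound
  have hpt : ∀ n, ‖OmegaB β w n - OmegaB' β w n‖ ≤ C * ‖w n‖ := by
    intro n
    by_cases h0 : w n = 0
    · simp [OmegaB, OmegaB', h0]
    · have hwn : 0 < ‖w n‖ := norm_pos_iff.2 h0
      have hNpos : 0 < N := lt_of_lt_of_le hwn (hle n)
      have hlogN : Real.log N ≤ 0 := Real.log_nonpos hNnn hw2
      set s : ℝ := Real.log (N / ‖w n‖) with hs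
      set t : ℝ := Real.log (1 / ‖w n‖) with ht
      have hseq : s = Real.log N - Real.log (‖w n‖) :=
        Real.log_div (ne_of_gt hNpos) (ne_of_gt hwn)
      have hteq : t = -Real.log (‖w n‖) := by
        rw [ht, one_div, Real.log_inv]
      have hs0 : 0 ≤ s := Real.log_nonneg ((one_le_div hwn).2 (hle n))
      have hst : s ≤ t := by rw [hseq, hteq]; linarith
      have hts : t - s = |Real.log N| := by
        rw [hseq, hteq, abs_of_nonpos hlogN]; ring
      have hkey := key_s8 β hs0 hst
      rw [hts] at hkey
      rw [OmegaB, OmegaB', if_neg h0, if_neg h0, ← mul_sub, norm_mul]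
      calc ‖w n‖ * ‖(s:ℂ)^b - (t:ℂ)^b‖
          ≤ ‖w n‖ * (‖b‖ * |Real.log N|) := by
            apply mul_le_mul_of_nonneg_left _ (norm_nonneg _)
            rw [← norm_neg, neg_sub]; exact hkey
        _ = C * ‖w n‖ := by rw [hC]; ring
  constructor
  · -- first inequality
    have hsum2 : Summable fun n => (C * ‖w n‖) ^ 2 := by
      have : (fun n => (C * ‖w n‖) ^ 2)
          = fun n => C ^ 2 * ‖w n‖ ^ 2 := by funext n; ring
      rw [this]; exact hsum.mul_left _
    have hsumd : Summable fun n => ‖OmegaB β w n - OmegaB' β w n‖ ^ 2 :=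
      Summable.of_nonneg_of_le (fun n => sq_nonneg _)
        (fun n => pow_le_pow_left₀ (norm_nonneg _) (hpt n) 2) hsum2
    have h1 : l2norm (fun n => OmegaB β w n - OmegaB' β w n) ≤ Real.sqrt (∑' n, (C * ‖w n‖) ^ 2) := by
      apply Real.sqrt_le_sqrt
      exact Summable.tsum_le_tsum (fun n => pow_le_pow_left₀ (norm_nonneg _) (hpt n) 2) hsumd hsum2
    have h2 : Real.sqrt (∑' n, (C * ‖w n‖) ^ 2) = C * N := by
      have : (∑' n, (C * ‖w n‖) ^ 2) = C ^ 2 * ∑' n, ‖w n‖ ^ 2 := by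
        rw [← tsum_mul_left]; congr 1; funext n; ring
      rw [this, Real.sqrt_mul (sq_nonneg _), Real.sqrt_sq hCnn, hN, l2norm]
    calc l2norm (fun n => OmegaB β w n - OmegaB' β w n) ≤ C * N := h1.trans (le_of_eq h2)
      _ = ‖b‖ * |Real.log N| * N := by rw [hC]
  · -- second inequality
    have hNl : |Real.log N| * N ≤ 1 := by
      rcases eq_or_lt_of_le hNnn with h0 | hNpos
      · rw [← h0]; simp [Real.log_zero]
      · have hlogN : Real.log N ≤ 0 := Real.log_nonpos hNnn hw2
        rw [abs_of_nonpos hlogN]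
        have : Real.log (1 / N) ≤ 1 / N - 1 := Real.log_le_sub_one_of_pos (by positivity)
        rw [one_div, Real.log_inv] at this
        have h3 : -Real.log N ≤ N⁻¹ := by linarith
        calc -Real.log N * N ≤ N⁻¹ * N := mul_le_mul_of_nonneg_right h3 hNnn
          _ = 1 := inv_mul_cancel₀ (ne_of_gt hNpos)
    calc ‖b‖ * |Real.log N| * N = ‖b‖ * (|Real.log N| * N) := by ring
      _ ≤ ‖b‖ * 1 := mul_le_mul_of_nonneg_left hNl (norm_nonneg _)
      _ = ‖b‖ := mul_one _
end

section
/- Fix β ∈ ℝ, b = 1 + iβ, and δ > 0, C > 0. Suppose (w_k)_{k≥1} are disjointly supported vectors in ℓ² with δ ≤ ‖w_k‖₂ ≤ 1 and ‖w_k‖∞ ≤ 1 for all k, and suppose that for every N, ‖Ω'_β(N^{-1/2} Σ_{k=1}^N w_k) − N^{-1/2} Σ_{k=1}^N Ω'_β(w_k)‖₂ ≤ C, where Ω'_β(w)(n) = w(n)(log(1/|w(n)|))^b. Then this leads to a contradiction; i.e., no such sequence exists. (Key step: the hypothesis implies δ²(log √N)² ≤ C² for all N ≥ 2.) -/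
open Complex

-- |e^{iθ} - 1| ≤ |θ|
lemma exp_I_sub_one_le (θ : ℝ) : ‖Complex.exp (θ * I) - 1‖ ≤ |θ| := by
  have h1 : ‖Complex.exp (θ * I) - 1‖ ^ 2 = 2 - 2 * Real.cos θ := by
    rw [Complex.sq_norm, Complex.normSq_apply]
    have : Complex.exp ((θ:ℂ) * I) = Real.cos θ + Real.sin θ * I := by
      rw [Complex.exp_mul_I, Complex.ofReal_cos, Complex.ofReal_sin]
    rw [this]
    simp [Complex.cos_ofReal_re, Complex.sin_ofReal_re]
    nlinarith [Real.sin_sq_add_cos_sq θ]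
  have h2 : 2 - 2 * Real.cos θ ≤ θ ^ 2 := by
    nlinarith [Real.one_sub_sq_div_two_le_cos (x := θ)]
  have h3 : ‖Complex.exp (θ * I) - 1‖ ^ 2 ≤ |θ| ^ 2 := by
    rw [h1, _root_.sq_abs]; exact h2
  exact (pow_le_pow_iff_left₀ (by positivity) (abs_nonneg θ) two_ne_zero).1 h3

lemma exp_I_dist (x y : ℝ) :
    ‖Complex.exp (x * I) - Complex.exp (y * I)‖ ≤ |x - y| := by
  have : Complex.exp ((x:ℂ) * I) - Complex.exp ((y:ℂ) * I)
      = Complex.exp ((y:ℂ) * I) * (Complex.exp (((x - y : ℝ) : ℂ) * I) - 1) := by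
    rw [mul_sub, ← Complex.exp_add, mul_one]; push_cast; ring_nf
  rw [this, norm_mul, Complex.norm_exp_ofReal_mul_I, one_mul]
  exact exp_I_sub_one_le _

lemma bne' (β : ℝ) : ((1:ℂ) + (β:ℝ) * I) ≠ 0 := by
  intro h
  have := congrArg Complex.re h
  simp at this

lemma abs_cpow_b (β x : ℝ) (hx : 0 ≤ x) :
    ‖(x:ℂ) ^ ((1:ℂ) + β * I)‖ = x := by
  rcases hx.eq_or_lt with h | h
  · rw [← h]; simp [Complex.zero_cpow (bne' β)]
  · rw [Complex.norm_cpow_eq_rpow_re_of_pos h]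
    simp

lemma cpow_pos_eq (β t : ℝ) (ht : 0 < t) :
    ((t:ℂ)) ^ ((1:ℂ) + β * I) = (t:ℂ) * Complex.exp (((β * Real.log t : ℝ)) * I) := by
  rw [Complex.cpow_def_of_ne_zero (Complex.ofReal_ne_zero.2 ht.ne')]
  rw [← Complex.ofReal_log ht.le]
  rw [mul_add, mul_one, Complex.exp_add]
  congr 1
  · rw [← Complex.ofReal_exp, Real.exp_log ht]
  · push_cast; ring_nf

lemma key_lb (β s L : ℝ) (hs : 0 ≤ s) (hL : 0 ≤ L) :
    L ≤ ‖(((s+L:ℝ)):ℂ) ^ ((1:ℂ) + β * I) - ((s:ℝ):ℂ) ^ ((1:ℂ) + β * I)‖ := by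
  have h1 := abs_cpow_b β (s+L) (by linarith)
  have h2 := abs_cpow_b β s hs
  have := le_trans (le_abs_self _)
    (abs_norm_sub_norm_le (((s+L:ℝ):ℂ) ^ ((1:ℂ) + β * I)) (((s:ℝ):ℂ) ^ ((1:ℂ) + β * I)))
  rw [h1, h2] at this
  linarith

lemma key_ub (β s L : ℝ) (hs : 0 ≤ s) (hL : 0 ≤ L) :
    ‖(((s+L:ℝ)):ℂ) ^ ((1:ℂ) + β * I) - ((s:ℝ):ℂ) ^ ((1:ℂ) + β * I)‖ ≤ (1 + |β|) * L := by
  rcases hs.eq_or_lt with h | h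
  · rw [← h]
    simp only [zero_add, Complex.ofReal_zero, Complex.zero_cpow (bne' β), sub_zero]
    rw [abs_cpow_b β L hL]
    nlinarith [abs_nonneg β]
  · have ht : (0:ℝ) < s + L := by linarith
    have heq : (((s+L:ℝ)):ℂ) ^ ((1:ℂ) + β * I) - ((s:ℝ):ℂ) ^ ((1:ℂ) + β * I)
        = (L:ℂ) * Complex.exp (((β * Real.log (s+L) : ℝ)) * I)
          + (s:ℂ) * (Complex.exp (((β * Real.log (s+L) : ℝ)) * I)
              - Complex.exp (((β * Real.log s : ℝ)) * I)) := by
      rw [cpow_pos_eq β _ ht, cpow_pos_eq β _ h]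
      push_cast
      ring
    rw [heq]
    have hlog : Real.log (s+L) - Real.log s ≤ L / s := by
      have : Real.log (s+L) - Real.log s = Real.log ((s+L)/s) := by
        rw [Real.log_div ht.ne' h.ne']
      rw [this]
      have := Real.log_le_sub_one_of_pos (x := (s+L)/s) (by positivity)
      have hd : (s+L)/s - 1 = L / s := by field_simp; ring
      linarith
    have hmono : Real.log s ≤ Real.log (s+L) := Real.log_le_log h (by linarith)
    calc ‖_‖ ≤ ‖(L:ℂ) * Complex.exp (((β * Real.log (s+L) : ℝ)) * I)‖
          + ‖(s:ℂ) * (Complex.exp (((β * Real.log (s+L) : ℝ)) * I)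
              - Complex.exp (((β * Real.log s : ℝ)) * I))‖ := norm_add_le _ _
      _ ≤ L * 1 + s * |β * Real.log (s+L) - β * Real.log s| := by
          rw [norm_mul, norm_mul, Complex.norm_exp_ofReal_mul_I, Complex.norm_real, Real.norm_eq_abs, Complex.norm_real, Real.norm_eq_abs,
            _root_.abs_of_nonneg hL, _root_.abs_of_nonneg hs]
          gcongr
          exact exp_I_dist _ _
      _ ≤ (1 + |β|) * L := by
          rw [← mul_sub, abs_mul, _root_.abs_of_nonneg (by linarith : (0:ℝ) ≤ Real.log (s+L) - Real.log s)]
          have : s * (Real.log (s+L) - Real.log s) ≤ L := by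
            have := mul_le_mul_of_nonneg_left hlog hs
            rw [mul_div_cancel₀] at this
            · linarith
            · exact h.ne'
          nlinarith [abs_nonneg β]

theorem stmt9 (β δ C : ℝ) (hδ : 0 < δ) (hC : 0 < C) (w : ℕ → ℕ → ℂ)
    (hdisj : ∀ k l, k ≠ l → ∀ n, w k n = 0 ∨ w l n = 0)
    (hmem : ∀ k, Memℓp (w k) 2)
    (hlow : ∀ k, δ ≤ l2norm (w k)) (hup : ∀ k, l2norm (w k) ≤ 1)
    (hinf : ∀ k n, ‖w k n‖ ≤ 1)
    (hbound : ∀ N : ℕ, 1 ≤ N →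
      l2norm (fun n =>
          OmegaB' β (fun m => (((N : ℝ) ^ (-(1/2 : ℝ)) : ℝ) : ℂ) * ∑ k ∈ Finset.range N, w k m) n -
            (((N : ℝ) ^ (-(1/2 : ℝ)) : ℝ) : ℂ) * ∑ k ∈ Finset.range N, OmegaB' β (w k) n) ≤ C) :
    False := by
  set N : ℕ := ⌈Real.exp (2 * C / δ)⌉₊ + 1 with hNdef
  have hN1 : 1 ≤ N := Nat.le_add_left 1 _
  have hN1R : (1:ℝ) ≤ (N:ℝ) := by exact_mod_cast hN1
  have hNpos : (0:ℝ) < (N:ℝ) := by linarith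
  have hNbig : Real.exp (2 * C / δ) < (N:ℝ) := by
    calc Real.exp (2 * C / δ) ≤ (⌈Real.exp (2 * C / δ)⌉₊ : ℝ) := Nat.le_ceil _
      _ < (N:ℝ) := by rw [hNdef]; push_cast; linarith
  set L : ℝ := Real.log N / 2 with hLdef
  have hL0 : 0 ≤ L := div_nonneg (Real.log_nonneg hN1R) (by norm_num)
  have hLC : C < δ * L := by
    have hlogN : 2 * C / δ < Real.log N := (Real.lt_log_iff_exp_lt hNpos).2 hNbig
    have := (div_lt_iff₀ hδ).1 hlogN
    rw [hLdef]; nlinarith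
  set c : ℝ := (N:ℝ) ^ (-(1/2:ℝ)) with hcdef
  have hc0 : 0 < c := Real.rpow_pos_of_pos hNpos _
  have hclog : Real.log c = -L := by
    rw [hcdef, Real.log_rpow hNpos, hLdef]; ring
  have hc2 : c ^ 2 * (N:ℝ) = 1 := by
    have : c ^ 2 = (N:ℝ) ^ (-(1/2:ℝ) * 2) := by
      rw [Real.rpow_mul hNpos.le, hcdef, ← Real.rpow_natCast ((N:ℝ) ^ (-(1/2:ℝ))) 2]
      norm_num
    rw [this]
    have : -(1/2:ℝ) * 2 = -1 := by norm_num
    rw [this, Real.rpow_neg_one]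
    field_simp
  -- the difference vector
  set D : ℕ → ℂ := fun n =>
      OmegaB' β (fun m => (((N : ℝ) ^ (-(1/2 : ℝ)) : ℝ) : ℂ) * ∑ k ∈ Finset.range N, w k m) n -
        (((N : ℝ) ^ (-(1/2 : ℝ)) : ℝ) : ℂ) * ∑ k ∈ Finset.range N, OmegaB' β (w k) n with hDdef
  have hB : l2norm D ≤ C := hbound N hN1
  have hcfold : ((((N : ℝ) ^ (-(1/2 : ℝ)) : ℝ) : ℂ)) = (c:ℂ) := by rw [hcdef]
  -- pointwise bounds
  have key : ∀ n, c * L * ‖∑ k ∈ Finset.range N, w k n‖ ≤ ‖D n‖ ∧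
      ‖D n‖ ≤ c * ((1 + |β|) * L) * ‖∑ k ∈ Finset.range N, w k n‖ := by
    intro n
    by_cases hex : ∃ k ∈ Finset.range N, w k n ≠ 0
    · obtain ⟨k₀, hk₀mem, hk₀⟩ := hex
      have hz : ∀ l ∈ Finset.range N, l ≠ k₀ → w l n = 0 := fun l _ hl =>
        (hdisj l k₀ hl n).resolve_right hk₀
      have hSn : ∑ k ∈ Finset.range N, w k n = w k₀ n := Finset.sum_eq_single_of_mem k₀ hk₀mem hz
      have hOn : ∑ k ∈ Finset.range N, OmegaB' β (w k) n = OmegaB' β (w k₀) n :=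
        Finset.sum_eq_single_of_mem k₀ hk₀mem (fun l hlm hl => by
          simp [OmegaB', hz l hlm hl])
      set a : ℝ := ‖w k₀ n‖ with ha
      have ha0 : 0 < a := norm_pos_iff.2 hk₀
      have ha1 : a ≤ 1 := hinf k₀ n
      set s : ℝ := Real.log (1 / a) with hsdef
      have hs0 : 0 ≤ s := by
        rw [hsdef, one_div, Real.log_inv]
        have := Real.log_nonpos ha0.le ha1
        linarith
      have hlogid : Real.log (1 / (c * a)) = s + L := by
        rw [one_div, Real.log_inv, Real.log_mul hc0.ne' ha0.ne', hclog, hsdef, one_div,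
          Real.log_inv]
        ring
      have hcn0 : (c:ℂ) * w k₀ n ≠ 0 :=
        mul_ne_zero (Complex.ofReal_ne_zero.2 hc0.ne') hk₀
      have habs : ‖(c:ℂ) * w k₀ n‖ = c * a := by
        rw [norm_mul, Complex.norm_real, Real.norm_eq_abs, _root_.abs_of_nonneg hc0.le, ← ha]
      have hval : D n = (c:ℂ) * w k₀ n *
          ((((s+L:ℝ)):ℂ) ^ ((1:ℂ) + β * I) - ((s:ℝ):ℂ) ^ ((1:ℂ) + β * I)) := by
        rw [hDdef]
        simp only [hcfold, hOn]
        simp only [OmegaB', hSn]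
        rw [if_neg hcn0, habs, ← ha, hlogid, if_neg hk₀, ← hsdef]
        ring
      have habsD : ‖D n‖ = (c * a) *
          ‖(((s+L:ℝ)):ℂ) ^ ((1:ℂ) + β * I) - ((s:ℝ):ℂ) ^ ((1:ℂ) + β * I)‖ := by
        rw [hval, norm_mul, norm_mul, Complex.norm_real, Real.norm_eq_abs, _root_.abs_of_nonneg hc0.le, ← ha]
      have hlb := key_lb β s L hs0 hL0
      have hub := key_ub β s L hs0 hL0
      constructor
      · rw [habsD, hSn, ← ha]
        nlinarith [mul_le_mul_of_nonneg_left hlb (by positivity : (0:ℝ) ≤ c * a)]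
      · rw [habsD, hSn, ← ha]
        nlinarith [mul_le_mul_of_nonneg_left hub (by positivity : (0:ℝ) ≤ c * a)]
    · push_neg at hex
      have hSn : ∑ k ∈ Finset.range N, w k n = 0 := Finset.sum_eq_zero hex
      have hOn : ∑ k ∈ Finset.range N, OmegaB' β (w k) n = 0 :=
        Finset.sum_eq_zero (fun l hl => by simp [OmegaB', hex l hl])
      have hDn : D n = 0 := by
        rw [hDdef]
        simp only [hOn]
        simp only [OmegaB', hSn]
        simp
      rw [hDn, hSn]
      simp
  -- summability facts
  have hwk : ∀ k, Summable (fun n => ‖w k n‖ ^ 2) := by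
    intro k
    have h := (memℓp_gen_iff (p := 2) (by norm_num)).1 (hmem k)
    refine h.congr (fun n => ?_)
    have h2 : ENNReal.toReal 2 = ((2:ℕ):ℝ) := by norm_num
    rw [h2, Real.rpow_natCast]
  have hpt : ∀ n, ‖∑ k ∈ Finset.range N, w k n‖ ^ 2
      = ∑ k ∈ Finset.range N, ‖w k n‖ ^ 2 := by
    intro n
    by_cases hex : ∃ k ∈ Finset.range N, w k n ≠ 0
    · obtain ⟨k₀, hk₀mem, hk₀⟩ := hex
      have hz : ∀ l ∈ Finset.range N, l ≠ k₀ → w l n = 0 := fun l _ hl =>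
        (hdisj l k₀ hl n).resolve_right hk₀
      have hSn : ∑ k ∈ Finset.range N, w k n = w k₀ n := Finset.sum_eq_single_of_mem k₀ hk₀mem hz
      rw [hSn, Finset.sum_eq_single_of_mem k₀ hk₀mem (fun l hlm hl => by rw [hz l hlm hl]; simp)]
    · push_neg at hex
      have hSn : ∑ k ∈ Finset.range N, w k n = 0 := Finset.sum_eq_zero hex
      rw [hSn, Finset.sum_eq_zero (fun l hl => by rw [hex l hl]; simp)]
      simp
  have hSsum : Summable (fun n => ‖∑ k ∈ Finset.range N, w k n‖ ^ 2) := by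
    refine Summable.congr ?_ (fun n => (hpt n).symm)
    exact summable_sum (fun k _ => hwk k)
  have hDsum : Summable (fun n => ‖D n‖ ^ 2) := by
    refine Summable.of_nonneg_of_le (fun n => by positivity) (fun n => ?_)
      (hSsum.mul_left ((c * ((1 + |β|) * L)) ^ 2))
    have h := pow_le_pow_left₀ (norm_nonneg _) (key n).2 2
    rw [mul_pow] at h
    exact h
  -- lower bound on tsum
  have htS : ((N:ℝ)) * δ ^ 2 ≤ ∑' n, ‖∑ k ∈ Finset.range N, w k n‖ ^ 2 := by
    have h2 : ∑' n, ‖∑ k ∈ Finset.range N, w k n‖ ^ 2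
        = ∑ k ∈ Finset.range N, ∑' n, ‖w k n‖ ^ 2 := by
      rw [tsum_congr hpt, Summable.tsum_finsetSum (fun k _ => hwk k)]
    rw [h2]
    have h3 : ∀ k, δ ^ 2 ≤ ∑' n, ‖w k n‖ ^ 2 := by
      intro k
      have h4 := pow_le_pow_left₀ hδ.le (hlow k) 2
      rw [l2norm, Real.sq_sqrt (tsum_nonneg (fun n => by positivity))] at h4
      exact h4
    calc ((N:ℝ)) * δ ^ 2 = ∑ _k ∈ Finset.range N, δ ^ 2 := by
          rw [Finset.sum_const, Finset.card_range, nsmul_eq_mul]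
      _ ≤ _ := Finset.sum_le_sum (fun k _ => h3 k)
  have htD : (δ * L) ^ 2 ≤ ∑' n, ‖D n‖ ^ 2 := by
    have h1 : (c * L) ^ 2 * ∑' n, ‖∑ k ∈ Finset.range N, w k n‖ ^ 2 ≤ ∑' n, ‖D n‖ ^ 2 := by
      rw [← tsum_mul_left]
      refine Summable.tsum_le_tsum (fun n => ?_) (hSsum.mul_left _) hDsum
      have h := pow_le_pow_left₀ (by positivity : (0:ℝ) ≤ c * L * ‖∑ k ∈ Finset.range N, w k n‖) (key n).1 2
      rw [mul_pow] at h
      exact h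
    have h2 : (δ * L) ^ 2 ≤ (c * L) ^ 2 * ((N:ℝ) * δ ^ 2) := by
      have : (c * L) ^ 2 * ((N:ℝ) * δ ^ 2) = (c ^ 2 * (N:ℝ)) * (δ * L) ^ 2 := by ring
      rw [this, hc2, one_mul]
    have h3 : (c * L) ^ 2 * ((N:ℝ) * δ ^ 2) ≤ (c * L) ^ 2 * ∑' n, ‖∑ k ∈ Finset.range N, w k n‖ ^ 2 :=
      mul_le_mul_of_nonneg_left htS (by positivity)
    linarith
  have hfin : δ * L ≤ l2norm D := by
    rw [l2norm]
    exact Real.le_sqrt_of_sq_le htD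
  linarith
end

section
/- Let α, β ∈ ℝ with α ≠ 0, a = 1+iα, b = 1+iβ, and λ ∈ ℂ with λ ≠ 0, μ, ν ∈ ℂ. Suppose that for every N ≥ 2, with σ = (1/2) log N, |ν σ^a − λ(σ + log|λ|)^b + μ| ≤ 1. Then a = b, i.e., α = β. -/
open Complex Filter Real

-- `r ^ (1 + γ i) = r * exp((γ log r) i)` for positive real `r`.
lemma cpow_aux (r γ : ℝ) (hr : 0 < r) :
    ((r : ℂ)) ^ ((1 : ℂ) + (γ : ℂ) * I) =
      (r : ℂ) * Complex.exp (((γ * Real.log r : ℝ) : ℂ) * I) := by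
  have hr0 : (r : ℂ) ≠ 0 := by exact_mod_cast hr.ne'
  rw [Complex.cpow_def_of_ne_zero hr0, ← Complex.ofReal_log hr.le]
  rw [mul_add, mul_one, Complex.exp_add]
  congr 1
  · rw [← Complex.ofReal_exp, Real.exp_log hr]
  · congr 1
    push_cast
    ring

theorem stmt12 (α β : ℝ) (hα : α ≠ 0) (lam μ ν : ℂ) (hlam : lam ≠ 0)
    (h : ∀ N : ℕ, 2 ≤ N →
      ‖ν * ((Real.log N / 2 : ℝ) : ℂ) ^ ((1 : ℂ) + α * I) -
          lam * ((Real.log N / 2 + Real.log ‖lam‖ : ℝ) : ℂ) ^ ((1 : ℂ) + β * I) +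
          μ‖ ≤ 1) :
    α = β := by
  by_contra hne
  set L : ℝ := Real.log ‖lam‖ with hL
  set s : ℕ → ℝ := fun N => Real.log N / 2 with hs
  set δ : ℝ := α - β with hδ
  have hδ0 : δ ≠ 0 := sub_ne_zero.mpr hne
  -- s tends to infinity
  have hs_top : Tendsto s atTop atTop := by
    apply Tendsto.atTop_div_const (by norm_num : (0:ℝ) < 2)
    exact Real.tendsto_log_atTop.comp tendsto_natCast_atTop_atTop
  -- eventually s N is large
  have hev : ∀ᶠ N in atTop, 2 ≤ N ∧ 1 ≤ s N ∧ |L| + 1 ≤ s N := by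
    filter_upwards [hs_top.eventually_ge_atTop 1, hs_top.eventually_ge_atTop (|L| + 1),
      eventually_ge_atTop 2] with N h1 h2 h3
    exact ⟨h3, h1, h2⟩
  -- positivity consequences
  have hpos : ∀ N : ℕ, 2 ≤ N ∧ 1 ≤ s N ∧ |L| + 1 ≤ s N → 0 < s N ∧ 0 < s N + L := by
    rintro N ⟨-, h1, h2⟩
    constructor
    · linarith
    · have := neg_abs_le L; linarith
  -- the key limit : ν * exp((δ log s N) i) → lam
  -- the ratio (s N + L) / s N tends to 1
  have hLs : Tendsto (fun N => L / s N) atTop (nhds 0) :=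
    tendsto_const_nhds.div_atTop hs_top
  have hratio : Tendsto (fun N => (s N + L) / s N) atTop (nhds 1) := by
    have h1 : Tendsto (fun N => 1 + L / s N) atTop (nhds (1 + 0)) :=
      tendsto_const_nhds.add hLs
    rw [add_zero] at h1
    apply h1.congr'
    filter_upwards [hev] with N hN
    have hsN : s N ≠ 0 := (hpos N hN).1.ne'
    field_simp
  -- the difference of logs tends to 0
  have hD : Tendsto (fun N => Real.log (s N + L) - Real.log (s N)) atTop (nhds 0) := by
    have h1 : Tendsto (fun N => Real.log ((s N + L) / s N)) atTop (nhds (Real.log 1)) :=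
      (Real.continuousAt_log one_ne_zero).tendsto.comp hratio
    rw [Real.log_one] at h1
    apply h1.congr'
    filter_upwards [hev] with N hN
    exact Real.log_div (hpos N hN).2.ne' (hpos N hN).1.ne'
  -- the correction factor tends to 1
  have hc : Tendsto (fun N => (((s N + L) / s N : ℝ) : ℂ) *
      Complex.exp (((β * (Real.log (s N + L) - Real.log (s N)) : ℝ) : ℂ) * I)) atTop
      (nhds 1) := by
    have h1 : Tendsto (fun N => (((s N + L) / s N : ℝ) : ℂ)) atTop (nhds (1 : ℂ)) := by
      have h3 := (Complex.continuous_ofReal.tendsto 1).comp hratio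
      simp only [Function.comp_def, Complex.ofReal_one] at h3
      exact h3
    have h2 : Tendsto (fun N => Complex.exp (((β * (Real.log (s N + L) - Real.log (s N)) : ℝ) : ℂ) * I))
        atTop (nhds 1) := by
      have hcont : Continuous (fun x : ℝ => Complex.exp (((β * x : ℝ) : ℂ) * I)) := by
        continuity
      have h3 := (hcont.tendsto 0).comp hD
      simp only [Function.comp_def, mul_zero, Complex.ofReal_zero, zero_mul,
        Complex.exp_zero] at h3
      exact h3
    have h4 := h1.mul h2
    rw [one_mul] at h4
    exact h4
  -- the main quantity G tends to 0
  have hG : Tendsto (fun N => ν * Complex.exp (((α * Real.log (s N) : ℝ) : ℂ) * I) -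
      lam * (((s N + L) / s N : ℝ) : ℂ) *
        Complex.exp (((β * Real.log (s N + L) : ℝ) : ℂ) * I)) atTop (nhds 0) := by
    apply squeeze_zero_norm' (a := fun N => (1 + ‖μ‖) / s N)
    · filter_upwards [hev] with N hN
      have hsN : 0 < s N := (hpos N hN).1
      have hsL : 0 < s N + L := (hpos N hN).2
      have hE := h N hN.1
      rw [cpow_aux _ α hsN, cpow_aux _ β hsL] at hE
      have hcast : (((s N + L) / s N : ℝ) : ℂ) = ((s N + L : ℝ) : ℂ) / ((s N : ℝ) : ℂ) := by
        push_cast; ring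
      have heq : ν * Complex.exp (((α * Real.log (s N) : ℝ) : ℂ) * I) -
          lam * (((s N + L) / s N : ℝ) : ℂ) *
            Complex.exp (((β * Real.log (s N + L) : ℝ) : ℂ) * I) =
          ((ν * ((s N : ℝ) : ℂ) * Complex.exp (((α * Real.log (s N) : ℝ) : ℂ) * I) -
            lam * (((s N + L : ℝ) : ℂ) * Complex.exp (((β * Real.log (s N + L) : ℝ) : ℂ) * I)) + μ)
            - μ) / ((s N : ℝ) : ℂ) := by
        rw [hcast]
        have hs0 : ((s N : ℝ) : ℂ) ≠ 0 := by exact_mod_cast hsN.ne'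
        field_simp
        ring
      rw [heq]
      rw [norm_div]
      have hnum : ‖(ν * ((s N : ℝ) : ℂ) * Complex.exp (((α * Real.log (s N) : ℝ) : ℂ) * I) -
            lam * (((s N + L : ℝ) : ℂ) * Complex.exp (((β * Real.log (s N + L) : ℝ) : ℂ) * I)) + μ)
            - μ‖ ≤ 1 + ‖μ‖ := by
        calc _ ≤ ‖ν * ((s N : ℝ) : ℂ) * Complex.exp (((α * Real.log (s N) : ℝ) : ℂ) * I) -
            lam * (((s N + L : ℝ) : ℂ) * Complex.exp (((β * Real.log (s N + L) : ℝ) : ℂ) * I)) + μ‖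
            + ‖μ‖ := norm_sub_le _ _
        _ ≤ 1 + ‖μ‖ := by
            apply add_le_add_left
            calc _ = ‖ν * ((s N : ℝ) : ℂ) * Complex.exp (((α * Real.log (s N) : ℝ) : ℂ) * I) -
              lam * (((s N + L : ℝ) : ℂ) * Complex.exp (((β * Real.log (s N + L) : ℝ) : ℂ) * I)) + μ‖ := rfl
            _ ≤ 1 := by
                convert hE using 3
                ring
      have hden : ‖((s N : ℝ) : ℂ)‖ = s N := by
        rw [Complex.norm_real, Real.norm_eq_abs, abs_of_pos hsN]
      rw [hden]
      gcongr
    · exact tendsto_const_nhds.div_atTop hs_top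
  -- the remainder tends to 0
  have hR : Tendsto (fun N => lam * (((s N + L) / s N : ℝ) : ℂ) *
      Complex.exp (((β * Real.log (s N + L) : ℝ) : ℂ) * I) -
      lam * Complex.exp (((β * Real.log (s N) : ℝ) : ℂ) * I)) atTop (nhds 0) := by
    apply squeeze_zero_norm' (a := fun N => ‖lam‖ *
      ‖(((s N + L) / s N : ℝ) : ℂ) *
        Complex.exp (((β * (Real.log (s N + L) - Real.log (s N)) : ℝ) : ℂ) * I) - 1‖)
    · filter_upwards [hev] with N hN
      have hsplit : Complex.exp (((β * Real.log (s N + L) : ℝ) : ℂ) * I) =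
          Complex.exp (((β * Real.log (s N) : ℝ) : ℂ) * I) *
          Complex.exp (((β * (Real.log (s N + L) - Real.log (s N)) : ℝ) : ℂ) * I) := by
        rw [← Complex.exp_add]
        congr 1
        push_cast
        ring
      have heq : lam * (((s N + L) / s N : ℝ) : ℂ) *
          Complex.exp (((β * Real.log (s N + L) : ℝ) : ℂ) * I) -
          lam * Complex.exp (((β * Real.log (s N) : ℝ) : ℂ) * I) =
          (lam * Complex.exp (((β * Real.log (s N) : ℝ) : ℂ) * I)) *
          ((((s N + L) / s N : ℝ) : ℂ) *
            Complex.exp (((β * (Real.log (s N + L) - Real.log (s N)) : ℝ) : ℂ) * I) - 1) := by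
        rw [hsplit]; ring
      rw [heq, norm_mul, norm_mul]
      have : ‖Complex.exp (((β * Real.log (s N) : ℝ) : ℂ) * I)‖ = 1 :=
        Complex.norm_exp_ofReal_mul_I _
      rw [this, mul_one]
    · have h1 := ((hc.sub (tendsto_const_nhds : Tendsto (fun _ : ℕ => (1:ℂ)) atTop _)).norm).const_mul ‖lam‖
      simpa using h1
  -- combine : A - B tends to 0
  have hAB : Tendsto (fun N => ν * Complex.exp (((α * Real.log (s N) : ℝ) : ℂ) * I) -
      lam * Complex.exp (((β * Real.log (s N) : ℝ) : ℂ) * I)) atTop (nhds 0) := by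
    have h1 := hG.add hR
    rw [add_zero] at h1
    apply h1.congr
    intro N
    ring
  -- multiply by a unimodular factor
  have hmain : Tendsto (fun N => ν * Complex.exp (((δ * Real.log (s N) : ℝ) : ℂ) * I))
      atTop (nhds lam) := by
    have hH : Tendsto (fun N => (ν * Complex.exp (((α * Real.log (s N) : ℝ) : ℂ) * I) -
        lam * Complex.exp (((β * Real.log (s N) : ℝ) : ℂ) * I)) *
        Complex.exp (((-(β * Real.log (s N)) : ℝ) : ℂ) * I)) atTop (nhds 0) := by
      apply squeeze_zero_norm' (a := fun N => ‖ν * Complex.exp (((α * Real.log (s N) : ℝ) : ℂ) * I) -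
        lam * Complex.exp (((β * Real.log (s N) : ℝ) : ℂ) * I)‖)
      · filter_upwards with N
        rw [norm_mul]
        have : ‖Complex.exp (((-(β * Real.log (s N)) : ℝ) : ℂ) * I)‖ = 1 :=
          Complex.norm_exp_ofReal_mul_I _
        rw [this, mul_one]
      · simpa using hAB.norm
    have heq : ∀ N : ℕ, (ν * Complex.exp (((α * Real.log (s N) : ℝ) : ℂ) * I) -
        lam * Complex.exp (((β * Real.log (s N) : ℝ) : ℂ) * I)) *
        Complex.exp (((-(β * Real.log (s N)) : ℝ) : ℂ) * I) =
        ν * Complex.exp (((δ * Real.log (s N) : ℝ) : ℂ) * I) - lam := by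
      intro N
      have e1 : Complex.exp (((α * Real.log (s N) : ℝ) : ℂ) * I) *
          Complex.exp (((-(β * Real.log (s N)) : ℝ) : ℂ) * I) =
          Complex.exp (((δ * Real.log (s N) : ℝ) : ℂ) * I) := by
        rw [← Complex.exp_add]
        congr 1
        push_cast [hδ]
        ring
      have e2 : Complex.exp (((β * Real.log (s N) : ℝ) : ℂ) * I) *
          Complex.exp (((-(β * Real.log (s N)) : ℝ) : ℂ) * I) = 1 := by
        rw [← Complex.exp_add]
        convert Complex.exp_zero using 2
        push_cast
        ring
      calc (ν * Complex.exp (((α * Real.log (s N) : ℝ) : ℂ) * I) -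
          lam * Complex.exp (((β * Real.log (s N) : ℝ) : ℂ) * I)) *
          Complex.exp (((-(β * Real.log (s N)) : ℝ) : ℂ) * I)
          = ν * (Complex.exp (((α * Real.log (s N) : ℝ) : ℂ) * I) *
              Complex.exp (((-(β * Real.log (s N)) : ℝ) : ℂ) * I)) -
            lam * (Complex.exp (((β * Real.log (s N) : ℝ) : ℂ) * I) *
              Complex.exp (((-(β * Real.log (s N)) : ℝ) : ℂ) * I)) := by ring
        _ = ν * Complex.exp (((δ * Real.log (s N) : ℝ) : ℂ) * I) - lam := by
            rw [e1, e2, mul_one]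
    rw [show (fun N => (ν * Complex.exp (((α * Real.log (s N) : ℝ) : ℂ) * I) -
        lam * Complex.exp (((β * Real.log (s N) : ℝ) : ℂ) * I)) *
        Complex.exp (((-(β * Real.log (s N)) : ℝ) : ℂ) * I)) =
        (fun N => ν * Complex.exp (((δ * Real.log (s N) : ℝ) : ℂ) * I) - lam) from
        funext heq] at hH
    have := hH.add (tendsto_const_nhds : Tendsto (fun _ : ℕ => lam) atTop _)
    rw [zero_add] at this
    apply this.congr
    intro N
    ring
  -- ν ≠ 0
  have hν : ν ≠ 0 := by
    intro h0
    rw [h0] at hmain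
    simp only [zero_mul] at hmain
    exact hlam (tendsto_nhds_unique tendsto_const_nhds hmain).symm
  -- for each k ≥ 2, exp((δ log k) i) = 1
  have hexp1 : ∀ k : ℕ, 2 ≤ k → Complex.exp (((δ * Real.log k : ℝ) : ℂ) * I) = 1 := by
    intro k hk
    have hpow_top : Tendsto (fun N : ℕ => N ^ k) atTop atTop :=
      tendsto_atTop_mono (fun N => Nat.le_self_pow (by omega) N) tendsto_id
    have hcomp : Tendsto (fun N => ν * Complex.exp (((δ * Real.log (s (N ^ k)) : ℝ) : ℂ) * I))
        atTop (nhds lam) := hmain.comp hpow_top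
    have heq : ∀ᶠ N in atTop, ν * Complex.exp (((δ * Real.log (s (N ^ k)) : ℝ) : ℂ) * I) =
        Complex.exp (((δ * Real.log k : ℝ) : ℂ) * I) *
          (ν * Complex.exp (((δ * Real.log (s N) : ℝ) : ℂ) * I)) := by
      filter_upwards [hev] with N hN
      have hsN : 0 < s N := (hpos N hN).1
      have hsk : s (N ^ k) = k * s N := by
        simp only [hs]
        push_cast
        rw [Real.log_pow]
        ring
      have hk0 : (0:ℝ) < (k:ℝ) := by positivity
      rw [hsk, Real.log_mul (ne_of_gt hk0) (ne_of_gt hsN)]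
      rw [mul_add, Complex.ofReal_add, add_mul, Complex.exp_add]
      ring
    have h2 : Tendsto (fun N => Complex.exp (((δ * Real.log k : ℝ) : ℂ) * I) *
        (ν * Complex.exp (((δ * Real.log (s N) : ℝ) : ℂ) * I))) atTop
        (nhds (Complex.exp (((δ * Real.log k : ℝ) : ℂ) * I) * lam)) :=
      hmain.const_mul _
    have huniq := tendsto_nhds_unique (hcomp.congr' heq) h2
    have h3 : Complex.exp (((δ * Real.log k : ℝ) : ℂ) * I) * lam = 1 * lam := by
      rw [one_mul]; exact huniq.symm
    exact mul_right_cancel₀ hlam h3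
  -- extract integers
  have hint : ∀ k : ℕ, 2 ≤ k → ∃ n : ℤ, δ * Real.log k = n * (2 * π) := by
    intro k hk
    obtain ⟨n, hn⟩ := (Complex.exp_eq_one_iff).mp (hexp1 k hk)
    refine ⟨n, ?_⟩
    rw [show (n : ℂ) * (2 * (π : ℂ) * I) = ((n : ℂ) * (2 * (π : ℂ))) * I by ring] at hn
    have h4 := mul_right_cancel₀ Complex.I_ne_zero hn
    exact_mod_cast h4
  obtain ⟨m, hm⟩ := hint 2 le_rfl
  obtain ⟨n, hn⟩ := hint 3 (by norm_num)
  simp only [Nat.cast_ofNat] at hm hn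
  -- derive n log 2 = m log 3
  have hlog2 : (0:ℝ) < Real.log 2 := Real.log_pos (by norm_num)
  have hlog3 : (0:ℝ) < Real.log 3 := Real.log_pos (by norm_num)
  have hm0 : m ≠ 0 := by
    intro h0
    rw [h0] at hm
    have h5 : δ * Real.log 2 = 0 := by simpa using hm
    rcases mul_eq_zero.mp h5 with h' | h'
    · exact hδ0 h'
    · exact hlog2.ne' h'
  have hn0 : n ≠ 0 := by
    intro h0
    rw [h0] at hn
    have h5 : δ * Real.log 3 = 0 := by simpa using hn
    rcases mul_eq_zero.mp h5 with h' | h'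
    · exact hδ0 h'
    · exact hlog3.ne' h'
  have hkey : (n : ℝ) * Real.log 2 = (m : ℝ) * Real.log 3 := by
    have h1 : (n:ℝ) * (δ * Real.log 2) = (n:ℝ) * ((m:ℝ) * (2 * π)) := by rw [hm]
    have h2 : (m:ℝ) * (δ * Real.log 3) = (m:ℝ) * ((n:ℝ) * (2 * π)) := by rw [hn]
    have h3 : δ * ((n:ℝ) * Real.log 2 - (m:ℝ) * Real.log 3) = 0 := by linarith [h1, h2]
    rcases mul_eq_zero.mp h3 with h' | h'
    · exact absurd h' hδ0
    · linarith
  -- signs of m and n agree; wlog positive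
  have hsame : 0 < (m:ℝ) * (n:ℝ) := by
    rcases lt_trichotomy (n:ℝ) 0 with hn' | hn' | hn'
    · have : (m:ℝ) * Real.log 3 < 0 := by rw [← hkey]; exact mul_neg_of_neg_of_pos hn' hlog2
      have hm' : (m:ℝ) < 0 := by
        by_contra hc
        push_neg at hc
        nlinarith
      nlinarith
    · exact absurd (by exact_mod_cast hn') hn0
    · have : 0 < (m:ℝ) * Real.log 3 := by rw [← hkey]; positivity
      have hm' : 0 < (m:ℝ) := by
        by_contra hc
        push_neg at hc
        nlinarith
      nlinarith
  -- produce natural number equation 2^p = 3^q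
  have habs : (n.natAbs : ℝ) * Real.log 2 = (m.natAbs : ℝ) * Real.log 3 := by
    rcases lt_trichotomy (n:ℝ) 0 with hn' | hn' | hn'
    · have hm' : (m:ℝ) < 0 := by nlinarith
      have h1 : (n.natAbs : ℝ) = -(n:ℝ) := by
        rw [Nat.cast_natAbs]; push_cast; rw [abs_of_neg]; exact_mod_cast hn'
      have h2 : (m.natAbs : ℝ) = -(m:ℝ) := by
        rw [Nat.cast_natAbs]; push_cast; rw [abs_of_neg]; exact_mod_cast hm'
      rw [h1, h2]; linarith
    · exact absurd (by exact_mod_cast hn') hn0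
    · have hm' : 0 < (m:ℝ) := by nlinarith
      have h1 : (n.natAbs : ℝ) = (n:ℝ) := by
        rw [Nat.cast_natAbs]; push_cast; rw [abs_of_pos]; exact_mod_cast hn'
      have h2 : (m.natAbs : ℝ) = (m:ℝ) := by
        rw [Nat.cast_natAbs]; push_cast; rw [abs_of_pos]; exact_mod_cast hm'
      rw [h1, h2]; linarith
  have hp0 : n.natAbs ≠ 0 := Int.natAbs_ne_zero.mpr hn0
  have hq0 : m.natAbs ≠ 0 := Int.natAbs_ne_zero.mpr hm0
  have hpoweq : (2:ℝ) ^ n.natAbs = (3:ℝ) ^ m.natAbs := by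
    have h1 : Real.log ((2:ℝ) ^ n.natAbs) = Real.log ((3:ℝ) ^ m.natAbs) := by
      rw [Real.log_pow, Real.log_pow]; exact habs
    have h2 : (0:ℝ) < (2:ℝ) ^ n.natAbs := by positivity
    have h3 : (0:ℝ) < (3:ℝ) ^ m.natAbs := by positivity
    exact Real.log_injOn_pos (Set.mem_Ioi.mpr h2) (Set.mem_Ioi.mpr h3) h1
  have hnat : (2:ℕ) ^ n.natAbs = 3 ^ m.natAbs := by exact_mod_cast hpoweq
  have heven : (2:ℕ) ^ n.natAbs % 2 = 0 := by
    rcases Nat.exists_eq_succ_of_ne_zero hp0 with ⟨p, hp⟩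
    rw [hp, pow_succ]
    omega
  have hodd : (3:ℕ) ^ m.natAbs % 2 = 1 := by
    rw [Nat.pow_mod]
    norm_num
  omega
end
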